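/- arXiv:2412.19281 — 10 statements merged into one kernel-verified Lean document; each statement's English description precedes it below -/
import Mathlib

section
/- For any single site x in a finite interval I ⊂ ℤ and any σ : ℤ → {-1,+1} with x ∈ I⁻(σ) and |I⁻(σ)| ≤ |I⁺(σ)| = m' (setting m = |I⁻(σ)|), one has ∑_{y ∈ I⁺(σ)} |x-y|^{-α} ≥ ∑_{k=m+1}^{2m} k^{-α}, since the multiset of distances {|x-y| : y ∈ I⁺(σ)} is dominated by {m+1, ..., |I|}. -/
/-!
Let `d y = |x - y|`. If for every `j < m` at least `j + 1` sites of `I⁺` lie within distance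
`m + 1 + j` of `x`, then the `j`-th closest site of `I⁺` is at distance at most `m + 1 + j`,
and the sum of the antitone weights `k ^ (-α)` over `I⁺` dominates `∑_{j<m} (m + 1 + j) ^ (-α)`.
The hypothesis holds because `|I| ≥ 2m`, so the window of radius `D = m + 1 + j ≤ 2m` around `x`
meets `I` in at least `D` sites, at most `m` of which are minus sites.
-/

open Finset

theorem Finset.sum_range_le_sum_of_card_filter_le {ι : Type*} [DecidableEq ι] (g : ℕ → ℝ)
    (n₀ : ℕ) (hg : AntitoneOn g (Set.Ici n₀)) (hg₀ : ∀ k, 0 ≤ g k) (d : ι → ℕ)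
    (m c : ℕ) (s : Finset ι) (hd : ∀ y ∈ s, n₀ ≤ d y)
    (hcount : ∀ j < m, j + 1 ≤ #{y ∈ s | d y ≤ c + j}) :
    ∑ j ∈ range m, g (c + j) ≤ ∑ y ∈ s, g (d y) := by
  induction m generalizing c s with
  | zero => simpa using sum_nonneg fun y _ => hg₀ (d y)
  | succ m ih =>
    -- a site within distance `c` pays for `g c`; the remaining sites satisfy the hypothesis for `c + 1`
    obtain ⟨y₀, hy₀⟩ := card_pos.mp (hcount 0 m.succ_pos)
    rw [mem_filter, add_zero] at hy₀
    have hcount' : ∀ j < m, j + 1 ≤ #{y ∈ s.erase y₀ | d y ≤ c + 1 + j} := by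
      intro j hj
      rw [add_right_comm c 1 j, add_assoc, filter_erase,
        card_erase_of_mem (mem_filter.mpr ⟨hy₀.1, by omega⟩)]
      have := hcount (j + 1) (by omega)
      omega
    calc ∑ j ∈ range (m + 1), g (c + j)
        = ∑ j ∈ range m, g (c + 1 + j) + g c := by
          rw [sum_range_succ', add_zero]; simp only [add_assoc, add_comm 1]
      _ ≤ ∑ y ∈ s.erase y₀, g (d y) + g (d y₀) :=
          add_le_add (ih (c + 1) (s.erase y₀) (fun y hy => hd y (mem_of_mem_erase hy)) hcount')
            (hg (hd y₀ hy₀.1) (le_trans (hd y₀ hy₀.1) hy₀.2) hy₀.2)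
      _ = ∑ y ∈ s, g (d y) := sum_erase_add s _ hy₀.1

theorem Int.min_card_Icc_le_card_filter_natAbs_sub_le {a b x : ℤ} (hx : x ∈ Icc a b) (D : ℕ) :
    min #(Icc a b) (D + 1) ≤ #{z ∈ Icc a b | (x - z).natAbs ≤ D} := by
  have hwindow : {z ∈ Icc a b | (x - z).natAbs ≤ D} = Icc (max a (x - D)) (min b (x + D)) := by
    ext z; simp only [mem_filter, mem_Icc, le_min_iff, max_le_iff]; omega
  rw [hwindow, Int.card_Icc, Int.card_Icc]
  rw [mem_Icc] at hx
  omega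

theorem Finset.card_filter_eq_one_add_card_filter_eq_neg_one {ι : Type*} {σ : ι → ℤ}
    (hσ : ∀ z, σ z = 1 ∨ σ z = -1) (s : Finset ι) :
    #{z ∈ s | σ z = 1} + #{z ∈ s | σ z = -1} = #s := by
  rw [← card_filter_add_card_filter_not (s := s) (fun z => σ z = 1)]
  congr 2
  exact filter_congr fun z _ => by rcases hσ z with h | h <;> simp [h]

theorem Int.succ_le_card_filter_natAbs_sub_le_of_spins {a b x : ℤ} {σ : ℤ → ℤ}
    (hσ : ∀ z, σ z = 1 ∨ σ z = -1) (hx : x ∈ Icc a b)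
    (hle : #{z ∈ Icc a b | σ z = -1} ≤ #{z ∈ Icc a b | σ z = 1}) {j : ℕ}
    (hj : j < #{z ∈ Icc a b | σ z = -1}) :
    j + 1 ≤ #{y ∈ {z ∈ Icc a b | σ z = 1} |
      (x - y).natAbs ≤ #{z ∈ Icc a b | σ z = -1} + 1 + j} := by
  have hwindow := Int.min_card_Icc_le_card_filter_natAbs_sub_le hx
    (#{z ∈ Icc a b | σ z = -1} + 1 + j)
  have hsplit := card_filter_eq_one_add_card_filter_eq_neg_one hσ
    {z ∈ Icc a b | (x - z).natAbs ≤ #{z ∈ Icc a b | σ z = -1} + 1 + j}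
  have hsplitI := card_filter_eq_one_add_card_filter_eq_neg_one hσ (Icc a b)
  have hneg : #{z ∈ {z ∈ Icc a b | (x - z).natAbs ≤ #{z ∈ Icc a b | σ z = -1} + 1 + j} |
      σ z = -1} ≤ #{z ∈ Icc a b | σ z = -1} :=
    card_le_card (filter_subset_filter _ (filter_subset _ _))
  rw [filter_comm] at hsplit
  omega

theorem stmt1 (α : ℝ) (hα : 1 < α) (a b : ℤ) (σ : ℤ → ℤ)
    (hσ : ∀ z, σ z = 1 ∨ σ z = -1) (x : ℤ)
    (hx : x ∈ (Finset.Icc a b).filter (fun z => σ z = -1))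
    (m : ℕ) (hm : m = ((Finset.Icc a b).filter (fun z => σ z = -1)).card)
    (hle : ((Finset.Icc a b).filter (fun z => σ z = -1)).card
            ≤ ((Finset.Icc a b).filter (fun z => σ z = 1)).card) :
    ∑ k ∈ Finset.Icc (m + 1) (2 * m), (k : ℝ) ^ (-α) ≤
      ∑ y ∈ (Finset.Icc a b).filter (fun z => σ z = 1),
        |(x : ℝ) - (y : ℝ)| ^ (-α) := by
  obtain ⟨hxI, hσx⟩ := mem_filter.mp hx
  have hdist : ∀ y ∈ {z ∈ Icc a b | σ z = 1}, 1 ≤ (x - y).natAbs := by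
    intro y hy
    have : y ≠ x := fun hyx => by subst hyx; have := (mem_filter.mp hy).2; omega
    omega
  have hantitone : AntitoneOn (fun k : ℕ => (k : ℝ) ^ (-α)) (Set.Ici 1) :=
    fun i hi _ _ hij => Real.rpow_le_rpow_of_nonpos (by exact_mod_cast hi) (by exact_mod_cast hij)
      (by linarith)
  calc ∑ k ∈ Icc (m + 1) (2 * m), (k : ℝ) ^ (-α)
      = ∑ j ∈ range m, ((m + 1 + j : ℕ) : ℝ) ^ (-α) := by
        rw [← Ico_add_one_right_eq_Icc, sum_Ico_eq_sum_range, show 2 * m + 1 - (m + 1) = m by omega]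
    _ ≤ ∑ y ∈ {z ∈ Icc a b | σ z = 1}, (((x - y).natAbs : ℕ) : ℝ) ^ (-α) :=
        sum_range_le_sum_of_card_filter_le _ 1 hantitone (fun k => by positivity) _ m (m + 1) _
          hdist (fun j hj => hm ▸ Int.succ_le_card_filter_natAbs_sub_le_of_spins hσ hxI hle (hm ▸ hj))
    _ = ∑ y ∈ {z ∈ Icc a b | σ z = 1}, |(x : ℝ) - (y : ℝ)| ^ (-α) := by
        push_cast [Nat.cast_natAbs]
        rfl
end

section
/- Let α > 1. There exists a constant c̄₁ > 0 depending only on α such that for every finite nonempty set A ⊂ ℤ, the total interaction J(A, Aᶜ) = ∑_{x ∈ A} ∑_{y ∈ ℤ \ A} |x-y|^{-α} satisfies J(A, Aᶜ) ≥ c̄₁ · |A|^{2-α}. -/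
/-!
Each `x ∈ A` sees at least `|A| + 1` points of `Aᶜ` in the window `[x - |A|, x + |A|]`, each at
distance at most `|A|`, so its interaction with `Aᶜ` is at least `|A| · |A|^{-α}`. Summing over
`x ∈ A` gives `J(A, Aᶜ) ≥ |A|^{2-α}`, so `c̄₁ = 1` works.
-/

open Finset

lemma summable_abs_sub_rpow_neg {α : ℝ} (hα : 1 < α) (x : ℤ) :
    Summable fun y : ℤ => |(x : ℝ) - y| ^ (-α) :=
  ((Real.summable_abs_int_rpow hα).comp_injective (sub_right_injective (b := x))).congr
    fun y => by simp

lemma summable_ite_mem_abs_sub_rpow_neg {α : ℝ} (hα : 1 < α) (A : Finset ℤ) (x : ℤ) :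
    Summable fun y : ℤ => if y ∈ A then 0 else |(x : ℝ) - y| ^ (-α) :=
  (summable_abs_sub_rpow_neg hα x).of_nonneg_of_le
    (fun y => by split_ifs <;> positivity) (fun y => by split_ifs <;> [positivity; rfl])

lemma card_lt_card_Icc_sdiff (A : Finset ℤ) (x : ℤ) :
    #A < #(Icc (x - #A) (x + #A) \ A) := by
  have hIcc : #(Icc (x - #A) (x + #A)) = 2 * #A + 1 := by rw [Int.card_Icc]; omega
  have := le_card_sdiff A (Icc (x - (#A : ℤ)) (x + #A))
  omega

lemma rpow_neg_le_abs_sub_rpow_neg {α : ℝ} (hα : 0 ≤ α) {x y : ℤ} {n : ℕ} (hxy : x ≠ y)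
    (hy : y ∈ Icc (x - n) (x + n)) :
    (n : ℝ) ^ (-α) ≤ |(x : ℝ) - y| ^ (-α) := by
  rw [mem_Icc] at hy
  have hcast : |(x : ℝ) - y| = ((|x - y| : ℤ) : ℝ) := by push_cast; rfl
  have hpos : (1 : ℝ) ≤ |(x : ℝ) - y| := by
    rw [hcast]; exact_mod_cast Int.one_le_abs (sub_ne_zero.mpr hxy)
  have hle : |(x : ℝ) - y| ≤ n := by
    rw [hcast]; exact_mod_cast abs_le.mpr ⟨by omega, by omega⟩
  exact Real.rpow_le_rpow_of_nonpos (by linarith) hle (by linarith)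

lemma card_rpow_one_sub_le_tsum {α : ℝ} (hα : 1 < α) {A : Finset ℤ} {x : ℤ} (hx : x ∈ A) :
    (#A : ℝ) ^ (1 - α) ≤ ∑' y : ℤ, if y ∈ A then 0 else |(x : ℝ) - y| ^ (-α) := by
  set n := #A
  set B := Icc (x - n) (x + n) \ A
  have hn : (0 : ℝ) < n := by exact_mod_cast card_pos.mpr ⟨x, hx⟩
  have hterm : ∀ y ∈ B, (n : ℝ) ^ (-α) ≤ if y ∈ A then 0 else |(x : ℝ) - y| ^ (-α) := by
    intro y hy
    rw [mem_sdiff] at hy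
    rw [if_neg hy.2]
    exact rpow_neg_le_abs_sub_rpow_neg (by linarith) (ne_of_mem_of_not_mem hx hy.2) hy.1
  calc (n : ℝ) ^ (1 - α) = n * (n : ℝ) ^ (-α) := by
        rw [sub_eq_add_neg, Real.rpow_add hn, Real.rpow_one]
    _ ≤ #B * (n : ℝ) ^ (-α) := by
        gcongr; exact_mod_cast (card_lt_card_Icc_sdiff A x).le
    _ ≤ ∑ y ∈ B, if y ∈ A then 0 else |(x : ℝ) - y| ^ (-α) := by
        simpa [nsmul_eq_mul] using card_nsmul_le_sum B _ _ hterm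
    _ ≤ _ := (summable_ite_mem_abs_sub_rpow_neg hα A x).sum_le_tsum B
        fun y _ => by split_ifs <;> positivity

theorem stmt2 (α : ℝ) (hα : 1 < α) :
    ∃ c : ℝ, 0 < c ∧ ∀ A : Finset ℤ, A.Nonempty →
      c * (A.card : ℝ) ^ (2 - α) ≤
        ∑ x ∈ A, ∑' y : ℤ, if y ∈ A then 0 else |(x : ℝ) - (y : ℝ)| ^ (-α) := by
  refine ⟨1, one_pos, fun A hA => ?_⟩
  have hn : (0 : ℝ) < #A := by exact_mod_cast card_pos.mpr hA
  calc 1 * (#A : ℝ) ^ (2 - α) = ∑ _x ∈ A, (#A : ℝ) ^ (1 - α) := by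
        rw [sum_const, nsmul_eq_mul, one_mul, show 2 - α = 1 + (1 - α) by ring,
          Real.rpow_add hn, Real.rpow_one]
    _ ≤ _ := sum_le_sum fun x hx => card_rpow_one_sub_le_tsum hα hx
end

section
/- For every finite interval I ⊂ ℤ there exist an integer ℓ ≥ 0 and an interval I_ℓ = [2^{ℓ-4}x - 2^{ℓ-1}, 2^{ℓ-4}x + 2^{ℓ-1}) ∩ ℤ for some x ∈ ℤ (of length 2^ℓ, with endpoints a, b) such that I ⊆ I_ℓ and max{d(I, a), d(I, b)} ≤ 0.7 · |I|, where d denotes the distance from the endpoint to the interval I. -/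
lemma key_cover (a b : ℤ) (ℓ : ℕ) (s : ℤ) (hab : a ≤ b) (hs : 1 ≤ s)
    (hx : ∀ q : ℤ, ∃ x : ℤ, 16 * (s * q) = 2 ^ ℓ * x - 8 * 2 ^ ℓ)
    (hA : s - 1 ≤ 2 ^ ℓ - (b - a + 1))
    (hC : 5 * ((2 ^ ℓ - (b - a + 1)) + s) ≤ 7 * (b - a + 1)) :
    ∃ (ℓ' : ℕ) (x lo : ℤ),
      16 * lo = 2 ^ ℓ' * x - 8 * 2 ^ ℓ' ∧
      Finset.Icc a b ⊆ Finset.Ico lo (lo + 2 ^ ℓ') ∧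
      ((a - lo : ℤ) : ℝ) ≤ 0.7 * ((b - a + 1 : ℤ) : ℝ) ∧
      (((lo + 2 ^ ℓ' - 1) - b : ℤ) : ℝ) ≤ 0.7 * ((b - a + 1 : ℤ) : ℝ) := by
  obtain ⟨m, hm⟩ : ∃ m : ℤ, 2 ^ ℓ = m := ⟨_, rfl⟩
  rw [hm] at hA hC hx
  have hm1 : (1 : ℤ) ≤ m := by rw [← hm]; exact one_le_pow₀ one_le_two
  obtain ⟨t, ht⟩ : ∃ t : ℤ, t = (m - (b - a + 1) - s + 1) / 2 := ⟨_, rfl⟩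
  have ht1 : 0 ≤ t ∧ 2 * t ≤ m - (b - a + 1) - s + 1 ∧ m - (b - a + 1) - s ≤ 2 * t := by
    subst ht; omega
  obtain ⟨x, hxq⟩ := hx ((a - t) / s)
  obtain ⟨r, hr⟩ : ∃ r : ℤ, r = (a - t) % s := ⟨_, rfl⟩
  have hkey : s * ((a - t) / s) + r = a - t := by rw [hr]; exact Int.mul_ediv_add_emod _ _
  have hr0 : 0 ≤ r := by rw [hr]; exact Int.emod_nonneg _ (by omega)
  have hr1 : r < s := by rw [hr]; exact Int.emod_lt_of_pos _ (by omega)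
  have c1 : 16 * (a - t - r) = m * x - 8 * m := by
    have hre : a - t - r = s * ((a - t) / s) := by linarith
    rw [hre]; exact hxq
  clear hkey hxq hr ht
  refine ⟨ℓ, x, a - t - r, ?_, ?_, ?_, ?_⟩
  · rw [hm]; exact c1
  · intro z hz
    simp only [Finset.mem_Icc] at hz
    simp only [Finset.mem_Ico, hm]
    omega
  · have h10 : (10 : ℤ) * (a - (a - t - r)) ≤ 7 * (b - a + 1) := by omega
    have h10' : ((10 : ℤ) * (a - (a - t - r)) : ℝ) ≤ ((7 * (b - a + 1) : ℤ) : ℝ) := by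
      exact_mod_cast h10
    push_cast at h10' ⊢
    nlinarith [h10']
  · rw [hm]
    have h10 : (10 : ℤ) * ((a - t - r + m - 1) - b) ≤ 7 * (b - a + 1) := by omega
    have h10' : ((10 : ℤ) * ((a - t - r + m - 1) - b) : ℝ) ≤ ((7 * (b - a + 1) : ℤ) : ℝ) := by
      exact_mod_cast h10
    push_cast at h10' ⊢
    nlinarith [h10']

theorem stmt3 (a b : ℤ) (hab : a ≤ b) :
    ∃ (ℓ : ℕ) (x lo : ℤ),
      16 * lo = 2 ^ ℓ * x - 8 * 2 ^ ℓ ∧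
      Finset.Icc a b ⊆ Finset.Ico lo (lo + 2 ^ ℓ) ∧
      ((a - lo : ℤ) : ℝ) ≤ 0.7 * ((b - a + 1 : ℤ) : ℝ) ∧
      (((lo + 2 ^ ℓ - 1) - b : ℤ) : ℝ) ≤ 0.7 * ((b - a + 1 : ℤ) : ℝ) := by
  obtain ⟨N, hN⟩ : ∃ N : ℕ, (N : ℤ) = b - a + 1 :=
    ⟨(b - a + 1).toNat, Int.toNat_of_nonneg (by omega)⟩
  have hN1 : 1 ≤ N := by omega
  rcases le_or_gt N 16 with hsmall | hlarge
  · -- small case : s = 1, ℓ = clog 2 N ≤ 4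
    set ℓ := Nat.clog 2 N with hℓ
    have h1 : N ≤ 2 ^ ℓ := Nat.le_pow_clog (by norm_num) N
    have hl4 : ℓ ≤ 4 ∧ 5 * 2 ^ ℓ + 5 ≤ 12 * N := by
      rcases Nat.lt_or_ge N 2 with h | h
      · have hN1' : N = 1 := by omega
        have hℓ0 : ℓ = 0 := by rw [hℓ, hN1', Nat.clog_one_right]
        rw [hℓ0, hN1']; norm_num
      · have h3 : 2 ^ (ℓ - 1) < N := Nat.pow_pred_clog_lt_self (by norm_num) h
        have h4 : 1 ≤ ℓ := Nat.clog_pos (by norm_num) h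
        have hp : 2 ^ ℓ = 2 * 2 ^ (ℓ - 1) := by
          rw [← pow_succ']; congr 1; omega
        constructor
        · by_contra hcon
          have : (2 : ℕ) ^ 4 ≤ 2 ^ (ℓ - 1) := Nat.pow_le_pow_right (by norm_num) (by omega)
          omega
        · omega
    have h1Z : ((N : ℤ)) ≤ (2 : ℤ) ^ ℓ := by exact_mod_cast h1
    have h2Z : 5 * (2 : ℤ) ^ ℓ + 5 ≤ 12 * (N : ℤ) := by exact_mod_cast hl4.2
    apply key_cover a b ℓ 1 hab le_rfl
    · intro q
      refine ⟨2 ^ (4 - ℓ) * q + 8, ?_⟩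
      have hpw : (2 : ℤ) ^ ℓ * 2 ^ (4 - ℓ) = 16 := by
        rw [← pow_add, show ℓ + (4 - ℓ) = 4 by omega]; norm_num
      linear_combination (-q) * hpw
    · rw [← hN]; linarith
    · rw [← hN]; linarith
  · -- large case : N ≥ 17
    obtain ⟨K, hK⟩ : ∃ K : ℕ, K = (16 * (N - 1) + 14) / 15 := ⟨_, rfl⟩
    have hK15 : 16 * (N - 1) ≤ 15 * K ∧ 15 * K ≤ 16 * (N - 1) + 14 := by subst hK; omega
    have hK2 : 2 ≤ K := by omega
    set ℓ := Nat.clog 2 K with hℓ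
    have h1 : K ≤ 2 ^ ℓ := Nat.le_pow_clog (by norm_num) K
    have h3 : 2 ^ (ℓ - 1) < K := Nat.pow_pred_clog_lt_self (by norm_num) hK2
    have h4 : 1 ≤ ℓ := Nat.clog_pos (by norm_num) hK2
    have hp : 2 ^ ℓ = 2 * 2 ^ (ℓ - 1) := by rw [← pow_succ']; congr 1; omega
    have hub : 15 * 2 ^ ℓ + 34 ≤ 32 * N := by omega
    have hlb : 16 * N ≤ 15 * 2 ^ ℓ + 16 := by omega
    have hℓ5 : 5 ≤ ℓ := by
      by_contra hcon
      have : (2 : ℕ) ^ ℓ ≤ 2 ^ 4 := Nat.pow_le_pow_right (by norm_num) (by omega)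
      omega
    have hs16 : (2 : ℤ) ^ (ℓ - 4) * 16 = 2 ^ ℓ := by
      rw [show (16 : ℤ) = 2 ^ 4 by norm_num, ← pow_add, show ℓ - 4 + 4 = ℓ by omega]
    have hubZ : 15 * (2 : ℤ) ^ ℓ + 34 ≤ 32 * (b - a + 1) := by
      rw [← hN]; exact_mod_cast hub
    have hlbZ : 16 * (b - a + 1) ≤ 15 * (2 : ℤ) ^ ℓ + 16 := by
      rw [← hN]; exact_mod_cast hlb
    apply key_cover a b ℓ ((2 : ℤ) ^ (ℓ - 4)) hab (one_le_pow₀ one_le_two)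
    · intro q
      exact ⟨q + 8, by linear_combination q * hs16⟩
    · linarith
    · linarith
end

section
/- Let λ > 0 and let (p_i)_{i=1}^N ∈ {0,1}^N be a λ-good sequence with p_1 = p_N = 1. Then the number of indices i with p_i = 1 is at least N^{log_{λ+2}(2)}. -/
/-- A 0-1 sequence `p` on `[1,N]` is `lam`-good: for every proper subinterval `[i,j]` of
`[1,N]` containing a 1, there is a 1 at some `x ∈ [1,N] \ [i,j]` with
`d(x,[i,j]) ≤ lam * |[i,j]| + 1`. -/
def IsLambdaGood (lam : ℝ) (N : ℕ) (p : ℕ → Bool) : Prop :=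
  ∀ i j : ℕ, 1 ≤ i → i ≤ j → j ≤ N → ¬(i = 1 ∧ j = N) →
    (∃ k, i ≤ k ∧ k ≤ j ∧ p k = true) →
    ∃ x, 1 ≤ x ∧ x ≤ N ∧ (x < i ∨ j < x) ∧ p x = true ∧
      ((if x < i then i - x else x - j : ℕ) : ℝ) ≤ lam * ((j - i + 1 : ℕ) : ℝ) + 1

/-!
Put `c = log₂ (λ + 2) ≥ 1`, so that `N ^ log_{λ+2} 2 = N ^ (1 / c)`; we show `N ≤ K ^ c` for `K`
the number of ones. Call a block `[l, r]` bounded by ones isolated if every one outside it is at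
least as far from it as any gap between consecutive ones inside it; `[1, N]` is isolated. Split an
isolated block at a longest gap `(a, b)`. Goodness applied to `[l, a]` gives
`b - a ≤ λ (a - l + 1) + 1`, since the nearest one outside `[l, a]` is either `b` or lies outside
the block; likewise for `[b, r]`, and both halves are isolated again. By induction the halves have
lengths `A ≤ u ^ c` and `B ≤ v ^ c`, and for `u ≤ v` the block has length
`A + B + (b - a) - 1 ≤ v ^ c + (1 + λ) u ^ c ≤ v ^ c + (2 ^ c - 1) u ^ c ≤ (u + v) ^ c`,
the last step by convexity of `t ↦ t ^ c`.
-/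

open Finset

theorem ConvexOn.map_add_sub_map_le_of_le {𝕜 : Type*} [Field 𝕜] [LinearOrder 𝕜]
    [IsStrictOrderedRing 𝕜] {s : Set 𝕜} {f : 𝕜 → 𝕜} (hf : ConvexOn 𝕜 s f) {x y d : 𝕜}
    (hx : x ∈ s) (hyd : y + d ∈ s) (hxy : x ≤ y) (hd : 0 ≤ d) :
    f (x + d) - f x ≤ f (y + d) - f y := by
  rcases hd.eq_or_lt with rfl | hd
  · simp
  have hmem : ∀ t, x ≤ t → t ≤ y + d → t ∈ s := fun t h₁ h₂ =>
    hf.1.ordConnected.out hx hyd ⟨h₁, h₂⟩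
  have h₁ : (f (x + d) - f x) / d ≤ (f (y + d) - f x) / (y + d - x) := by
    convert hf.secant_mono hx (hmem _ (by linarith) (by linarith)) hyd (by linarith)
      (by linarith) (by linarith : x + d ≤ y + d) using 2
    ring
  have h₂ : (f (y + d) - f x) / (y + d - x) ≤ (f (y + d) - f y) / d := by
    convert hf.secant_mono hyd hx (hmem _ hxy (by linarith)) (by linarith) (by linarith) hxy
      using 1 <;> rw [← neg_div_neg_eq] <;> ring_nf
  exact (div_le_div_iff_of_pos_right hd).1 (h₁.trans h₂)

theorem Real.rpow_add_two_rpow_sub_one_mul_rpow_le {c x y : ℝ} (hc : 1 ≤ c) (hx : 0 ≤ x)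
    (hxy : x ≤ y) : y ^ c + (2 ^ c - 1) * x ^ c ≤ (x + y) ^ c := by
  have h := (convexOn_rpow hc).map_add_sub_map_le_of_le hx (by simp; linarith) hxy hx
  rw [← two_mul, Real.mul_rpow zero_le_two hx, add_comm y] at h
  linarith

theorem add_sub_one_add_le_rpow_add {lam c A B g x y : ℝ} (hlam : 0 ≤ lam) (hc : 1 ≤ c)
    (h2c : lam + 2 ≤ 2 ^ c) (hx : 0 ≤ x) (hy : 0 ≤ y) (hA : A ≤ x ^ c) (hB : B ≤ y ^ c)
    (hgA : g ≤ lam * A + 1) (hgB : g ≤ lam * B + 1) : A + g - 1 + B ≤ (x + y) ^ c := by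
  wlog hxy : x ≤ y generalizing A B x y
  · linarith [add_comm x y ▸ this hy hx hB hA hgB hgA (le_of_not_ge hxy)]
  have hxc : 0 ≤ x ^ c := Real.rpow_nonneg hx c
  calc A + g - 1 + B ≤ y ^ c + (1 + lam) * x ^ c := by nlinarith
    _ ≤ y ^ c + (2 ^ c - 1) * x ^ c := by gcongr; linarith
    _ ≤ (x + y) ^ c := Real.rpow_add_two_rpow_sub_one_mul_rpow_le hc hx hxy

section Gaps

variable {p : ℕ → Bool}

def IsGap (p : ℕ → Bool) (a b : ℕ) : Prop :=
  a < b ∧ p a ∧ p b ∧ ∀ t, a < t → t < b → p t = false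

def GapsLE (p : ℕ → Bool) (l r g : ℕ) : Prop :=
  ∀ a b, l ≤ a → b ≤ r → IsGap p a b → b - a ≤ g

def IsIsolated (N : ℕ) (p : ℕ → Bool) (l r : ℕ) : Prop :=
  (∀ x, 1 ≤ x → x < l → p x → GapsLE p l r (l - x)) ∧
    (∀ x, r < x → x ≤ N → p x → GapsLE p l r (x - r))

theorem IsGap.right_le {a b x : ℕ} (hab : IsGap p a b) (hax : a < x) (hx : p x) : b ≤ x :=
  Nat.le_of_not_lt fun hxb => by simp [hab.2.2.2 x hax hxb] at hx

theorem IsGap.le_left {a b x : ℕ} (hab : IsGap p a b) (hxb : x < b) (hx : p x) : x ≤ a :=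
  Nat.le_of_not_lt fun hax => by simp [hab.2.2.2 x hax hxb] at hx

theorem GapsLE.mono {l r l' r' g g' : ℕ} (h : GapsLE p l r g) (hl : l ≤ l') (hr : r' ≤ r)
    (hg : g ≤ g') : GapsLE p l' r' g' :=
  fun a b ha hb hab => (h a b (hl.trans ha) (hb.trans hr) hab).trans hg

open Classical in
theorem exists_maximal_isGap {l r : ℕ} (hlr : l < r) (hl : p l) (hr : p r) :
    ∃ a b, l ≤ a ∧ b ≤ r ∧ IsGap p a b ∧ GapsLE p l r (b - a) := by
  let gaps := (Icc l r ×ˢ Icc l r).filter fun q => IsGap p q.1 q.2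
  have hne : gaps.Nonempty := by
    have hex : ∃ t, l < t ∧ p t := ⟨r, hlr, hr⟩
    obtain ⟨hlt, hp⟩ := Nat.find_spec hex
    refine ⟨(l, Nat.find hex), mem_filter.2 ⟨?_, hlt, hl, hp, fun t hlt' ht => ?_⟩⟩
    · have := Nat.find_min' hex ⟨hlr, hr⟩
      simp only [mem_product, mem_Icc]
      omega
    · simpa [hlt'] using Nat.find_min hex ht
  obtain ⟨⟨a, b⟩, hmem, hmax⟩ := exists_max_image gaps (fun q => q.2 - q.1) hne
  simp only [gaps, mem_filter, mem_product, mem_Icc] at hmem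
  refine ⟨a, b, hmem.1.1.1, hmem.1.2.2, hmem.2, fun y z hy hz hyz => ?_⟩
  have hyz_lt := hyz.1
  exact hmax (y, z) (mem_filter.2 ⟨by simp only [mem_product, mem_Icc]; omega, hyz⟩)

theorem card_filter_Icc_eq_add_of_isGap {l r a b : ℕ} (hab : IsGap p a b) (hla : l ≤ a)
    (hbr : b ≤ r) :
    #{i ∈ Icc l r | p i} = #{i ∈ Icc l a | p i} + #{i ∈ Icc b r | p i} := by
  have hab_lt := hab.1
  rw [← card_union_of_disjoint (disjoint_filter_filter (disjoint_left.2 fun t h₁ h₂ => by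
    simp only [mem_Icc] at h₁ h₂; omega))]
  congr 1
  ext t
  simp only [mem_union, mem_filter, mem_Icc]
  constructor
  · rintro ⟨⟨hlt, htr⟩, ht⟩
    rcases le_or_gt t a with hta | hat
    · exact Or.inl ⟨⟨hlt, hta⟩, ht⟩
    · exact Or.inr ⟨⟨hab.right_le hat ht, htr⟩, ht⟩
  · rintro (⟨⟨h₁, h₂⟩, ht⟩ | ⟨⟨h₁, h₂⟩, ht⟩) <;> exact ⟨⟨by omega, by omega⟩, ht⟩

namespace IsIsolated

variable {N l r a b : ℕ}

theorem left (hiso : IsIsolated N p l r) (hab : IsGap p a b) (hbr : b ≤ r)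
    (hmax : GapsLE p l r (b - a)) : IsIsolated N p l a := by
  have hab_lt := hab.1
  exact ⟨fun x hx hxl hpx => (hiso.1 x hx hxl hpx).mono le_rfl (by omega) le_rfl,
    fun x hax _ hpx => hmax.mono le_rfl (by omega) (by have := hab.right_le hax hpx; omega)⟩

theorem right (hiso : IsIsolated N p l r) (hab : IsGap p a b) (hla : l ≤ a)
    (hmax : GapsLE p l r (b - a)) : IsIsolated N p b r := by
  have hab_lt := hab.1
  exact ⟨fun x _ hxb hpx => hmax.mono (by omega) le_rfl (by have := hab.le_left hxb hpx; omega),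
    fun x hrx hxN hpx => (hiso.2 x hrx hxN hpx).mono (by omega) le_rfl le_rfl⟩

end IsIsolated

end Gaps

namespace IsLambdaGood

variable {lam : ℝ} {N : ℕ} {p : ℕ → Bool}

theorem le_mul_add_one (hgood : IsLambdaGood lam N p) {i j g : ℕ} (hi : 1 ≤ i) (hij : i ≤ j)
    (hjN : j ≤ N) (hproper : ¬(i = 1 ∧ j = N)) (hone : ∃ k, i ≤ k ∧ k ≤ j ∧ p k = true)
    (hL : ∀ x, 1 ≤ x → x < i → p x → g ≤ i - x) (hR : ∀ x, j < x → x ≤ N → p x → g ≤ x - j) :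
    (g : ℝ) ≤ lam * ((j - i + 1 : ℕ) : ℝ) + 1 := by
  obtain ⟨x, hx1, hxN, hxI | hxI, hpx, hdist⟩ := hgood i j hi hij hjN hproper hone
  · rw [if_pos hxI] at hdist
    exact le_trans (by exact_mod_cast hL x hx1 hxI hpx) hdist
  · rw [if_neg (by omega)] at hdist
    exact le_trans (by exact_mod_cast hR x hxI hxN hpx) hdist

section

variable {l r a b : ℕ}

theorem gap_le_left (hgood : IsLambdaGood lam N p) (hiso : IsIsolated N p l r)
    (hab : IsGap p a b) (hl : 1 ≤ l) (hla : l ≤ a) (hbr : b ≤ r) (hrN : r ≤ N) :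
    ((b - a : ℕ) : ℝ) ≤ lam * ((a - l + 1 : ℕ) : ℝ) + 1 := by
  have hab_lt := hab.1
  refine hgood.le_mul_add_one hl hla (by omega) (by omega) ⟨a, hla, le_rfl, hab.2.1⟩
    (fun x hx hxl hpx => hiso.1 x hx hxl hpx a b hla hbr hab) (fun x hax _ hpx => ?_)
  have := hab.right_le hax hpx
  omega

theorem gap_le_right (hgood : IsLambdaGood lam N p) (hiso : IsIsolated N p l r)
    (hab : IsGap p a b) (hl : 1 ≤ l) (hla : l ≤ a) (hbr : b ≤ r) (hrN : r ≤ N) :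
    ((b - a : ℕ) : ℝ) ≤ lam * ((r - b + 1 : ℕ) : ℝ) + 1 := by
  have hab_lt := hab.1
  refine hgood.le_mul_add_one (by omega) hbr hrN (by omega) ⟨b, le_rfl, hbr, hab.2.2.1⟩
    (fun x _ hxb hpx => ?_) (fun x hrx hxN hpx => hiso.2 x hrx hxN hpx a b hla hbr hab)
  have := hab.le_left hxb hpx
  omega

end

theorem length_le_card_rpow (hgood : IsLambdaGood lam N p) {c : ℝ} {l r : ℕ} (hlam : 0 ≤ lam)
    (hc : 1 ≤ c) (h2c : lam + 2 ≤ 2 ^ c) (hl : 1 ≤ l) (hlr : l ≤ r) (hrN : r ≤ N) (hpl : p l)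
    (hpr : p r) (hiso : IsIsolated N p l r) :
    ((r - l + 1 : ℕ) : ℝ) ≤ (#{i ∈ Icc l r | p i} : ℝ) ^ c := by
  rcases hlr.eq_or_lt with rfl | hlr
  · simp [filter_singleton, hpl]
  obtain ⟨a, b, hla, hbr, hab, hmax⟩ := exists_maximal_isGap hlr hpl hpr
  have hab_lt := hab.1
  have ihL := hgood.length_le_card_rpow hlam hc h2c hl hla (by omega) hpl hab.2.1
    (hiso.left hab hbr hmax)
  have ihR := hgood.length_le_card_rpow hlam hc h2c (by omega) hbr hrN hab.2.2.1 hpr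
    (hiso.right hab hla hmax)
  have hlen : ((r - l + 1 : ℕ) : ℝ) + 1 =
      ((a - l + 1 : ℕ) : ℝ) + ((b - a : ℕ) : ℝ) + ((r - b + 1 : ℕ) : ℝ) := by
    exact_mod_cast (by omega : r - l + 1 + 1 = (a - l + 1) + (b - a) + (r - b + 1))
  rw [card_filter_Icc_eq_add_of_isGap hab hla hbr, Nat.cast_add (#{i ∈ Icc l a | p i})]
  have hsum := add_sub_one_add_le_rpow_add hlam hc h2c (Nat.cast_nonneg _) (Nat.cast_nonneg _)
    ihL ihR (hgood.gap_le_left hiso hab hl hla hbr hrN) (hgood.gap_le_right hiso hab hl hla hbr hrN)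
  linarith
termination_by r - l

end IsLambdaGood

theorem stmt4 (lam : ℝ) (hlam : 0 < lam) (N : ℕ) (hN : 1 ≤ N) (p : ℕ → Bool)
    (h1 : p 1 = true) (hNp : p N = true) (hgood : IsLambdaGood lam N p) :
    (N : ℝ) ^ (Real.logb (lam + 2) 2) ≤
      (((Finset.Icc 1 N).filter (fun i => p i = true)).card : ℝ) := by
  let c := Real.logb 2 (lam + 2)
  have h2c : (2 : ℝ) ^ c = lam + 2 := Real.rpow_logb two_pos (by norm_num) (by linarith)
  have hc : 1 ≤ c := by
    rw [Real.le_logb_iff_rpow_le one_lt_two (by linarith), Real.rpow_one]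
    linarith
  have hiso : IsIsolated N p 1 N := ⟨fun x hx hx1 _ => absurd hx1 (by omega),
    fun x hNx hxN _ => absurd hxN (by omega)⟩
  have key := hgood.length_le_card_rpow hlam.le hc h2c.ge le_rfl hN le_rfl h1 hNp hiso
  rw [Nat.sub_add_cancel hN] at key
  rw [← Real.inv_logb, Real.rpow_inv_le_iff_of_pos (Nat.cast_nonneg _) (Nat.cast_nonneg _)
    (by linarith)]
  exact key
end

section
/- Let λ > 0, let M ≥ 2, and suppose (p_i)_{i=1}^M is λ-good with p_1 = p_M = 1. If [n,m] ⊂ [1,M] is a maximal interval on which all p_i = 0, then the restricted sequence (p_i)_{i=1}^{n-1} is also λ-good. -/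
theorem stmt5 (lam : ℝ) (hlam : 0 < lam) (M : ℕ) (hM : 2 ≤ M) (p : ℕ → Bool)
    (h1 : p 1 = true) (hMp : p M = true) (hgood : IsLambdaGood lam M p)
    (n m : ℕ) (h1n : 1 ≤ n) (hnm : n ≤ m) (hmM : m ≤ M)
    (hzero : ∀ i, n ≤ i → i ≤ m → p i = false)
    (hmax : ∀ n' m', 1 ≤ n' → n' ≤ m' → m' ≤ M →
      (∀ i, n' ≤ i → i ≤ m' → p i = false) → m' - n' ≤ m - n) :
    IsLambdaGood lam (n - 1) p := by
  intro i j hi hij hjn hne hex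
  have hn2 : 2 ≤ n := by omega
  obtain ⟨x, hx1, hxM, hxij, hpx, hdist⟩ :=
    hgood i j hi hij (by omega) (by rintro ⟨rfl, rfl⟩; omega) hex
  rcases hxij with hxlt | hxgt
  · exact ⟨x, hx1, by omega, Or.inl hxlt, hpx, hdist⟩
  · rcases le_or_gt x (n - 1) with hxn | hxn
    · exact ⟨x, hx1, hxn, Or.inr hxgt, hpx, hdist⟩
    · -- x ≥ n, hence x > m since p is zero on [n,m]
      have hxm : m < x := by
        by_contra hc
        push_neg at hc
        have := hzero x (by omega) hc
        rw [hpx] at this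
        exact Bool.true_eq_false.mp this |>.elim
      -- maximality forces p (n-1) = true
      have hpn1 : p (n - 1) = true := by
        by_contra hf
        rw [Bool.not_eq_true] at hf
        have h := hmax (n - 1) m (by omega) (by omega) hmM (fun k hk1 hk2 => by
          rcases Nat.eq_or_lt_of_le hk1 with heq | hlt
          · rw [← heq]; exact hf
          · exact hzero k (by omega) hk2)
        omega
      rw [if_neg (by omega)] at hdist
      rcases lt_or_ge j (n - 1) with hjlt | hjge
      · -- right witness n - 1 works
        refine ⟨n - 1, by omega, le_refl _, Or.inr hjlt, hpn1, ?_⟩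
        rw [if_neg (by omega)]
        calc ((n - 1 - j : ℕ) : ℝ) ≤ ((x - j : ℕ) : ℝ) := by
              exact_mod_cast Nat.sub_le_sub_right (by omega) j
          _ ≤ _ := hdist
      · -- j = n - 1 ; find the greatest 1 below i
        have hj : j = n - 1 := le_antisymm hjn hjge
        have hi2 : 2 ≤ i := by
          have : i ≠ 1 := fun h => hne ⟨h, hj⟩
          omega
        set s := Nat.findGreatest (fun k => p k = true) (i - 1) with hs
        have h1s : 1 ≤ s := Nat.le_findGreatest (by omega) h1
        have hsle : s ≤ i - 1 := Nat.findGreatest_le (i - 1)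
        have hps : p s = true := Nat.findGreatest_spec (P := fun k => p k = true)
          (by omega) h1
        -- i - s ≤ m - n + 2
        have hkey : i - s ≤ m - n + 2 := by
          rcases Nat.eq_or_lt_of_le hsle with heq | hlt
          · omega
          · have h := hmax (s + 1) (i - 1) (by omega) (by omega) (by omega)
              (fun k hk1 hk2 => by
                have hnp : ¬ p k = true :=
                  Nat.findGreatest_is_greatest (P := fun k => p k = true)
                    (n := i - 1) (by omega) (by omega)
                rw [Bool.not_eq_true] at hnp
                exact hnp)
            omega
        -- m - n + 2 ≤ x - j
        have hkey2 : i - s ≤ x - j := by omega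
        refine ⟨s, h1s, by omega, Or.inl (by omega), hps, ?_⟩
        rw [if_pos (by omega)]
        calc ((i - s : ℕ) : ℝ) ≤ ((x - j : ℕ) : ℝ) := by exact_mod_cast hkey2
          _ ≤ _ := hdist
end

section
/- For real λ > 0 and M > 0, if N₁, N₂ > 0 satisfy N₁ ≤ N₂ and M ≤ N₁(1+λ) + N₂ (so that (2+λ)N₂ ≥ M), then N₁^{log_{λ+2}(2)} + N₂^{log_{λ+2}(2)} ≥ M^{log_{λ+2}(2)}. In particular ((M - N₂)/(λ+1))^{log_{λ+2}(2)} + N₂^{log_{λ+2}(2)} ≥ 2(M/(λ+2))^{log_{λ+2}(2)} = M^{log_{λ+2}(2)} when N₂ ≥ M/(2+λ). -/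
/-!
Put `θ = log_{λ+2} 2`, so that `0 ≤ θ ≤ 1` and `(λ+2)^θ = 2`. For `0 ≤ a ≤ b` and `M = (λ+1)a + b`,
let `c = M/(λ+2)` and `s = a/c ∈ [0,1]`; then `a = s c` and `b = s c + (1-s) M`. Concavity of
`x ↦ x^θ` gives `b^θ ≥ s c^θ + (1-s) M^θ`, and `a^θ = s^θ c^θ ≥ s c^θ`. Adding, and using
`2 c^θ = M^θ`, yields `a^θ + b^θ ≥ M^θ`. Both inequalities of the theorem are this estimate,
the first after the monotonicity step `M ≤ (1+λ)N₁ + N₂`.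
-/

open Real

theorem Real.rpow_mul_add_le_rpow_add_rpow {θ k a b : ℝ} (hθ₀ : 0 ≤ θ) (hθ₁ : θ ≤ 1) (hk : 0 ≤ k)
    (hk₂ : (k + 1) ^ θ ≤ 2) (ha : 0 ≤ a) (hab : a ≤ b) :
    (k * a + b) ^ θ ≤ a ^ θ + b ^ θ := by
  rcases ha.eq_or_lt with rfl | ha
  · simpa using rpow_nonneg le_rfl θ
  set M := k * a + b with hM
  set c := M / (k + 1) with hc
  set s := a / c with hs
  have hM₀ : 0 < M := by nlinarith
  have hc₀ : 0 < c := by positivity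
  have hsc : s * c = a := div_mul_cancel₀ a hc₀.ne'
  have hs₀ : 0 ≤ s := by positivity
  have hs₁ : s ≤ 1 := by
    rw [hs, div_le_one hc₀, hc, le_div_iff₀ (by positivity)]
    linarith
  have hb : s * c + (1 - s) * M = b := by
    have hsM : s * M = a * (k + 1) := by
      rw [← hsc, hc]; field_simp
    linear_combination hsc - hsM + hM
  have hconcave : s * c ^ θ + (1 - s) * M ^ θ ≤ b ^ θ := by
    have := (concaveOn_rpow hθ₀ hθ₁).2 (Set.mem_Ici.2 hc₀.le) (Set.mem_Ici.2 hM₀.le)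
      hs₀ (sub_nonneg.2 hs₁) (by ring)
    simpa only [smul_eq_mul, hb] using this
  have hsmall : s * c ^ θ ≤ a ^ θ := by
    rw [← hsc, mul_rpow hs₀ hc₀.le]
    exact mul_le_mul_of_nonneg_right (self_le_rpow_of_le_one hs₀ hs₁ hθ₁) (rpow_nonneg hc₀.le θ)
  have hMc : M ^ θ ≤ 2 * c ^ θ := by
    rw [hc, div_rpow hM₀.le (by positivity), mul_div, le_div_iff₀ (by positivity), mul_comm 2]
    exact mul_le_mul_of_nonneg_left hk₂ (rpow_nonneg hM₀.le θ)
  nlinarith [mul_le_mul_of_nonneg_left hMc hs₀]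

theorem stmt6_general (lam M N₁ N₂ : ℝ) (hlam : 0 < lam) (hM : 0 < M)
    (hN₁ : 0 < N₁) (h12 : N₁ ≤ N₂)
    (hsum : M ≤ N₁ * (1 + lam) + N₂) :
    M ^ (Real.logb (lam + 2) 2) ≤
        N₁ ^ (Real.logb (lam + 2) 2) + N₂ ^ (Real.logb (lam + 2) 2) ∧
    2 * (M / (lam + 2)) ^ (Real.logb (lam + 2) 2) = M ^ (Real.logb (lam + 2) 2) ∧
    (M / (2 + lam) ≤ N₂ → N₂ ≤ M →
      M ^ (Real.logb (lam + 2) 2) ≤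
        ((M - N₂) / (lam + 1)) ^ (Real.logb (lam + 2) 2) +
          N₂ ^ (Real.logb (lam + 2) 2)) := by
  set θ := logb (lam + 2) 2
  have hθ₀ : 0 ≤ θ := logb_nonneg (by linarith) (by norm_num)
  have hθ₁ : θ ≤ 1 := (logb_le_iff_le_rpow (by linarith) two_pos).2 (by rw [rpow_one]; linarith)
  have hpow : (lam + 2) ^ θ = 2 := rpow_logb (by linarith) (by linarith) (by norm_num)
  have key {a b : ℝ} : 0 ≤ a → a ≤ b → ((lam + 1) * a + b) ^ θ ≤ a ^ θ + b ^ θ :=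
    rpow_mul_add_le_rpow_add_rpow hθ₀ hθ₁ (by linarith) (by rw [add_assoc, one_add_one_eq_two, hpow])
  refine ⟨?_, ?_, fun hlow hhigh => ?_⟩
  · calc M ^ θ ≤ ((lam + 1) * N₁ + N₂) ^ θ := rpow_le_rpow hM.le (by linarith) hθ₀
      _ ≤ N₁ ^ θ + N₂ ^ θ := key hN₁.le h12
  · rw [div_rpow hM.le (by linarith), hpow]
    ring
  · have hlam₁ : 0 < lam + 1 := by linarith
    have hsplit : M = (lam + 1) * ((M - N₂) / (lam + 1)) + N₂ := by field_simp; ring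
    conv_lhs => rw [hsplit]
    refine key (div_nonneg (by linarith) hlam₁.le) ?_
    rw [div_le_iff₀ hlam₁]
    rw [div_le_iff₀ (by linarith)] at hlow
    linarith

theorem stmt6 (lam M N₁ N₂ : ℝ) (hlam : 0 < lam) (hM : 0 < M)
    (hN₁ : 0 < N₁) (hN₂ : 0 < N₂) (h12 : N₁ ≤ N₂)
    (hsum : M ≤ N₁ * (1 + lam) + N₂) :
    M ^ (Real.logb (lam + 2) 2) ≤
        N₁ ^ (Real.logb (lam + 2) 2) + N₂ ^ (Real.logb (lam + 2) 2) ∧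
    2 * (M / (lam + 2)) ^ (Real.logb (lam + 2) 2) = M ^ (Real.logb (lam + 2) 2) ∧
    (M / (2 + lam) ≤ N₂ → N₂ ≤ M →
      M ^ (Real.logb (lam + 2) 2) ≤
        ((M - N₂) / (lam + 1)) ^ (Real.logb (lam + 2) 2) +
          N₂ ^ (Real.logb (lam + 2) 2)) :=
  stmt6_general lam M N₁ N₂ hlam hM hN₁ h12 hsum
end

section
/- Let r > 4 and α = 3. There is a constant b₈ > 0 depending only on r such that for every L ≥ 1, every L-cube C ⊂ ℤ² (of side 2^{rL}), and every configuration σ : ℤ² → {-1,+1}, if m = min(|C⁺(σ)|, |C⁻(σ)|), then J(C⁺(σ), C⁻(σ)) = ∑_{x ∈ C⁺(σ)} ∑_{y ∈ C⁻(σ)} |x-y|^{-3} ≥ b₈ · √(m+1) · ln(m+1). -/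
/-- Long-range interaction in `ℤ²`: `|x - y|^{-α}` with Euclidean distance. -/
noncomputable def Jint2 (α : ℝ) (p q : ℤ × ℤ) : ℝ :=
  (Real.sqrt (((p.1 - q.1 : ℤ) : ℝ) ^ 2 + ((p.2 - q.2 : ℤ) : ℝ) ^ 2)) ^ (-α)

/-- The cube of side `s` in `ℤ²` with lower corner `s • x`. -/
noncomputable def cube2 (s : ℕ) (x : ℤ × ℤ) : Finset (ℤ × ℤ) :=
  Finset.Ico ((s : ℤ) * x.1) ((s : ℤ) * (x.1 + 1)) ×ˢ
    Finset.Ico ((s : ℤ) * x.2) ((s : ℤ) * (x.2 + 1))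

/-!
Fix a dyadic scale `ρ = 2^k` with `ρ^6 ≤ m`, where `A` is the minority colour, `m = |A|`, and cut
the cube into blocks of side `ρ`. If at least half of `A` lies in blocks that `A` fills to at most
`3/4`, each of these points has `ρ²/4` partners of `B` in its own block. Otherwise the blocks
filled by `A` to more than `3/4` carry mass `≳ m`, and the discrete isoperimetric inequality on
the grid of blocks yields `≳ √m / ρ` adjacent pairs (such a block, a block at least `1/4` filled
by `B`), each contributing `≳ ρ⁴` pairs. Either way `A × B` contains `≳ ρ³ √m` pairs at distance
at most `4ρ`. Since `|p - q|⁻³ ≳ ∑_{j : |p - q| ≤ 2^j} 8^{-j}`, each of the `≈ log m / log 64`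
scales then contributes `≳ √m` to the interaction.
-/

open Finset

def sqDist (p q : ℤ × ℤ) : ℕ := (p.1 - q.1).natAbs ^ 2 + (p.2 - q.2).natAbs ^ 2

def closePairs (A B : Finset (ℤ × ℤ)) (R : ℕ) : Finset ((ℤ × ℤ) × (ℤ × ℤ)) :=
  (A ×ˢ B).filter fun pq => sqDist pq.1 pq.2 ≤ R

lemma sqDist_pos {p q : ℤ × ℤ} (h : p ≠ q) : 0 < sqDist p q := by
  refine Nat.pos_of_ne_zero fun h0 => ?_
  simp only [sqDist, Nat.add_eq_zero_iff, pow_eq_zero_iff two_ne_zero, Int.natAbs_eq_zero,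
    sub_eq_zero] at h0
  exact h (Prod.ext h0.1 h0.2)

lemma Jint2_comm (α : ℝ) (p q : ℤ × ℤ) : Jint2 α p q = Jint2 α q p := by
  simp only [Jint2]
  congr 2
  push_cast
  ring

lemma Jint2_three_eq (p q : ℤ × ℤ) : Jint2 3 p q = (Real.sqrt (sqDist p q) ^ 3)⁻¹ := by
  rw [Jint2, Real.rpow_neg (Real.sqrt_nonneg _), sqDist]
  norm_cast
  push_cast [Nat.cast_natAbs, sq_abs]
  rfl

lemma dyadic_sum_le_inv_sqrt_pow_three {d : ℕ} (hd : 0 < d) (N : ℕ) :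
    7 / 8 * ∑ j ∈ range N, (if d ≤ 4 ^ j then (1 / 8 : ℝ) ^ j else 0) ≤
      (Real.sqrt d ^ 3)⁻¹ := by
  set j₀ := Nat.clog 4 d
  have hd₀ : (d : ℝ) ≤ 4 ^ j₀ := by exact_mod_cast Nat.le_pow_clog (by norm_num) d
  have hsum : ∑ j ∈ range N, (if d ≤ 4 ^ j then (1 / 8 : ℝ) ^ j else 0) ≤
      ∑ j ∈ Ico j₀ N, (1 / 8 : ℝ) ^ j := by
    rw [← sum_filter]
    refine sum_le_sum_of_subset_of_nonneg (fun j hj => ?_) (fun _ _ _ => by positivity)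
    rw [mem_filter, mem_range] at hj
    exact mem_Ico.2 ⟨Nat.clog_le_of_le_pow hj.2, hj.1⟩
  have hgeom := geom_sum_Ico_le_of_lt_one (x := (1 / 8 : ℝ)) (m := j₀) (n := N)
    (by norm_num) (by norm_num)
  have hcube : Real.sqrt d ^ 3 ≤ 8 ^ j₀ := by
    have h2 : Real.sqrt ((4 : ℝ) ^ j₀) = 2 ^ j₀ := by
      rw [show (4 : ℝ) ^ j₀ = (2 ^ j₀) ^ 2 by rw [← pow_mul, mul_comm, pow_mul]; norm_num,
        Real.sqrt_sq (by positivity)]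
    calc Real.sqrt d ^ 3 ≤ (2 ^ j₀ : ℝ) ^ 3 := by
          gcongr; rw [← h2]; exact Real.sqrt_le_sqrt hd₀
      _ = 8 ^ j₀ := by rw [← pow_mul, mul_comm, pow_mul]; norm_num
  have hpos : 0 < Real.sqrt d ^ 3 := by positivity
  calc 7 / 8 * ∑ j ∈ range N, (if d ≤ 4 ^ j then (1 / 8 : ℝ) ^ j else 0)
      ≤ 7 / 8 * ((1 / 8) ^ j₀ / (1 - 1 / 8)) := by gcongr; exact hsum.trans hgeom
    _ = (8 ^ j₀)⁻¹ := by rw [one_div, inv_pow]; ring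
    _ ≤ (Real.sqrt d ^ 3)⁻¹ := inv_anti₀ hpos hcube

lemma dyadic_sum_card_closePairs_le_sum_Jint2 {A B : Finset (ℤ × ℤ)} (hAB : Disjoint A B)
    (N : ℕ) :
    7 / 8 * ∑ j ∈ range N, (1 / 8 : ℝ) ^ j * #(closePairs A B (4 ^ j)) ≤
      ∑ p ∈ A, ∑ q ∈ B, Jint2 3 p q := by
  have hcount : ∀ j, (1 / 8 : ℝ) ^ j * #(closePairs A B (4 ^ j)) =
      ∑ pq ∈ A ×ˢ B, if sqDist pq.1 pq.2 ≤ 4 ^ j then (1 / 8 : ℝ) ^ j else 0 := fun j => by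
    rw [← sum_filter, sum_const, nsmul_eq_mul, closePairs, mul_comm]
  have hpair : ∀ pq ∈ A ×ˢ B, 7 / 8 * ∑ j ∈ range N,
      (if sqDist pq.1 pq.2 ≤ 4 ^ j then (1 / 8 : ℝ) ^ j else 0) ≤ Jint2 3 pq.1 pq.2 := by
    intro pq hpq
    rw [mem_product] at hpq
    rw [Jint2_three_eq]
    have hne : pq.1 ≠ pq.2 := fun h => disjoint_left.1 hAB hpq.1 (h ▸ hpq.2)
    exact dyadic_sum_le_inv_sqrt_pow_three (sqDist_pos hne) N
  simp_rw [hcount]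
  rw [sum_comm, mul_sum, ← sum_product']
  exact sum_le_sum hpair

lemma card_cube2 (s : ℕ) (x : ℤ × ℤ) : #(cube2 s x) = s ^ 2 := by
  simp only [cube2, card_product, Int.card_Ico, ← mul_sub, add_sub_cancel_left, mul_one,
    Int.toNat_natCast, sq]

section Blocks

variable {ρ n : ℕ} {x : ℤ × ℤ}

def blockOf (ρ : ℕ) (p : ℤ × ℤ) : ℤ × ℤ := (p.1 / ρ, p.2 / ρ)

lemma mem_cube2_mul_iff (hρ : 0 < ρ) (p : ℤ × ℤ) :
    p ∈ cube2 (n * ρ) x ↔ blockOf ρ p ∈ cube2 n x := by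
  have hρ' : (0 : ℤ) < ρ := by exact_mod_cast hρ
  simp only [cube2, blockOf, mem_product, mem_Ico, Int.le_ediv_iff_mul_le hρ',
    Int.ediv_lt_iff_lt_mul hρ', Nat.cast_mul, mul_right_comm (n : ℤ) (ρ : ℤ)]

lemma mem_cube2_iff_blockOf_eq (hρ : 0 < ρ) (p g : ℤ × ℤ) :
    p ∈ cube2 ρ g ↔ blockOf ρ p = g := by
  have := mem_cube2_mul_iff (n := 1) (x := g) hρ p
  rw [one_mul] at this
  rw [this, cube2]
  simp only [Nat.cast_one, one_mul, mem_product, mem_Ico, Prod.ext_iff]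
  omega

lemma cube2_subset_cube2_mul (hρ : 0 < ρ) {g : ℤ × ℤ} (hg : g ∈ cube2 n x) :
    cube2 ρ g ⊆ cube2 (n * ρ) x := fun p hp => by
  rwa [mem_cube2_mul_iff hρ, (mem_cube2_iff_blockOf_eq hρ p g).1 hp]

lemma sum_card_inter_cube2 (hρ : 0 < ρ) {A : Finset (ℤ × ℤ)} (hA : A ⊆ cube2 (n * ρ) x) :
    ∑ g ∈ cube2 n x, #(A ∩ cube2 ρ g) = #A := by
  rw [card_eq_sum_card_fiberwise fun p hp => (mem_cube2_mul_iff hρ p).1 (hA hp)]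
  refine sum_congr rfl fun g _ => congr_arg card ?_
  ext p
  simp only [mem_inter, mem_filter, mem_cube2_iff_blockOf_eq hρ]

lemma card_inter_cube2_add_card_inter_cube2 (hρ : 0 < ρ) {A B : Finset (ℤ × ℤ)}
    (hAB : A ∪ B = cube2 (n * ρ) x) (hdisj : Disjoint A B) {g : ℤ × ℤ} (hg : g ∈ cube2 n x) :
    #(A ∩ cube2 ρ g) + #(B ∩ cube2 ρ g) = ρ ^ 2 := by
  rw [← card_union_of_disjoint (hdisj.mono inter_subset_left inter_subset_left),
    ← union_inter_distrib_right, hAB, inter_eq_right.2 (cube2_subset_cube2_mul hρ hg),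
    card_cube2]

lemma natAbs_sub_lt_of_natAbs_ediv_sub_le_one (hρ : 0 < ρ) {a b : ℤ}
    (h : (a / ρ - b / ρ).natAbs ≤ 1) : (a - b).natAbs < 2 * ρ := by
  have hρ' : (0 : ℤ) < ρ := by exact_mod_cast hρ
  have ha := Int.mul_ediv_self_le (x := a) hρ'.ne'
  have hb := Int.mul_ediv_self_le (x := b) hρ'.ne'
  have ha' := Int.lt_mul_ediv_self_add (x := a) hρ'
  have hb' := Int.lt_mul_ediv_self_add (x := b) hρ'
  have h1 : ρ * (a / ρ) ≤ ρ * (b / ρ + 1) := by gcongr; omega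
  have h2 : ρ * (b / ρ) ≤ ρ * (a / ρ + 1) := by gcongr; omega
  rw [mul_add_one] at h1 h2
  omega

lemma sqDist_lt_of_blockOf (hρ : 0 < ρ) {p q : ℤ × ℤ}
    (h₁ : ((blockOf ρ p).1 - (blockOf ρ q).1).natAbs ≤ 1)
    (h₂ : ((blockOf ρ p).2 - (blockOf ρ q).2).natAbs ≤ 1) : sqDist p q < 8 * ρ ^ 2 := by
  have d₁ := natAbs_sub_lt_of_natAbs_ediv_sub_le_one hρ h₁
  have d₂ := natAbs_sub_lt_of_natAbs_ediv_sub_le_one hρ h₂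
  calc sqDist p q < (2 * ρ) ^ 2 + (2 * ρ) ^ 2 :=
        Nat.add_lt_add (Nat.pow_lt_pow_left d₁ two_ne_zero) (Nat.pow_lt_pow_left d₂ two_ne_zero)
    _ = 8 * ρ ^ 2 := by ring

lemma sum_card_mul_card_le_card_closePairs (hρ : 0 < ρ) {A B : Finset (ℤ × ℤ)} {R : ℕ}
    (hR : 8 * ρ ^ 2 ≤ R) (Γ : Finset ((ℤ × ℤ) × (ℤ × ℤ)))
    (hΓ : ∀ e ∈ Γ, (e.1.1 - e.2.1).natAbs ≤ 1 ∧ (e.1.2 - e.2.2).natAbs ≤ 1) :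
    ∑ e ∈ Γ, #(A ∩ cube2 ρ e.1) * #(B ∩ cube2 ρ e.2) ≤ #(closePairs A B R) := by
  simp_rw [← card_product]
  rw [← card_biUnion]
  · refine card_le_card fun pq hpq => ?_
    simp only [mem_biUnion, mem_product, mem_inter, mem_cube2_iff_blockOf_eq hρ] at hpq
    obtain ⟨e, he, ⟨hpA, hp⟩, hqB, hq⟩ := hpq
    rw [closePairs, mem_filter, mem_product]
    refine ⟨⟨hpA, hqB⟩, (sqDist_lt_of_blockOf hρ ?_ ?_).le.trans hR⟩
    · rw [hp, hq]; exact (hΓ e he).1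
    · rw [hp, hq]; exact (hΓ e he).2
  · intro e _ e' _ hne
    rw [Function.onFun, disjoint_left]
    intro pq hpq hpq'
    simp only [mem_product, mem_inter, mem_cube2_iff_blockOf_eq hρ] at hpq hpq'
    exact hne (Prod.ext (hpq.1.2.symm.trans hpq'.1.2) (hpq.2.2.symm.trans hpq'.2.2))

end Blocks

section Isoperimetry

def edgeBoundary (Λ S : Finset (ℤ × ℤ)) : Finset ((ℤ × ℤ) × (ℤ × ℤ)) :=
  (S ×ˢ (Λ \ S)).filter fun e => (e.1.1 - e.2.1).natAbs + (e.1.2 - e.2.2).natAbs = 1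

lemma Int.exists_le_lt_and_not_succ {P : ℤ → Prop} {a b : ℤ} (hab : a ≤ b) (ha : P a)
    (hb : ¬ P b) : ∃ c, a ≤ c ∧ c < b ∧ P c ∧ ¬ P (c + 1) := by
  induction b, hab using Int.leInduction with
  | base => exact absurd ha hb
  | succ b hab ih =>
    by_cases hPb : P b
    · exact ⟨b, hab, lt_add_one b, hPb, hb⟩
    · obtain ⟨c, hac, hcb, hc⟩ := ih hPb
      exact ⟨c, hac, hcb.trans (lt_add_one b), hc⟩

lemma card_mixed_lines_le_card_edgeBoundary {Λ S : Finset (ℤ × ℤ)} (J : Finset ℤ) {lo hi : ℤ}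
    (ℓ : ℤ → ℤ → ℤ × ℤ) (hΛ : ∀ j ∈ J, ∀ i ∈ Ico lo hi, ℓ j i ∈ Λ)
    (hadj : ∀ j i, ((ℓ j i).1 - (ℓ j (i + 1)).1).natAbs +
      ((ℓ j i).2 - (ℓ j (i + 1)).2).natAbs = 1)
    (hline : ∀ j j' i i', ℓ j i = ℓ j' i' → j = j') :
    #(J.filter fun j => (∃ i ∈ Ico lo hi, ℓ j i ∈ S) ∧ ∃ i ∈ Ico lo hi, ℓ j i ∉ S) ≤
      #(edgeBoundary Λ S) := by
  have hedge : ∀ j ∈ J.filter fun j => (∃ i ∈ Ico lo hi, ℓ j i ∈ S) ∧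
      ∃ i ∈ Ico lo hi, ℓ j i ∉ S, ∃ e ∈ edgeBoundary Λ S, ∃ i, e.1 = ℓ j i := by
    intro j hj
    obtain ⟨hjJ, ⟨i₁, hi₁, hin⟩, i₂, hi₂, hout⟩ := mem_filter.1 hj
    rw [mem_Ico] at hi₁ hi₂
    simp only [edgeBoundary, mem_filter, mem_product, mem_sdiff]
    rcases le_total i₁ i₂ with h | h
    · obtain ⟨c, hc₁, hc₂, hcS, hcS'⟩ :=
        Int.exists_le_lt_and_not_succ (P := fun i => ℓ j i ∈ S) h hin hout
      exact ⟨(ℓ j c, ℓ j (c + 1)), ⟨⟨hcS, hΛ j hjJ _ (mem_Ico.2 ⟨by omega, by omega⟩), hcS'⟩,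
        hadj j c⟩, c, rfl⟩
    · obtain ⟨c, hc₁, hc₂, hcS, hcS'⟩ :=
        Int.exists_le_lt_and_not_succ (P := fun i => ℓ j i ∉ S) h hout (not_not.2 hin)
      refine ⟨(ℓ j (c + 1), ℓ j c), ⟨⟨not_not.1 hcS', hΛ j hjJ _ (mem_Ico.2 ⟨by omega, by omega⟩),
        hcS⟩, ?_⟩, c + 1, rfl⟩
      have := hadj j c
      dsimp only
      omega
  choose! f hf hfℓ using hedge
  refine card_le_card_of_injOn f (fun j hj => hf j hj) fun j hj j' hj' hjj' => ?_
  obtain ⟨i, hi⟩ := hfℓ j hj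
  obtain ⟨i', hi'⟩ := hfℓ j' hj'
  exact hline j j' i i' (hi.symm.trans (hjj' ▸ hi'))

def mixedRows (I J : Finset ℤ) (S : Finset (ℤ × ℤ)) : Finset ℤ :=
  J.filter fun j => (∃ i ∈ I, (i, j) ∈ S) ∧ ∃ i ∈ I, (i, j) ∉ S

def mixedCols (I J : Finset ℤ) (S : Finset (ℤ × ℤ)) : Finset ℤ :=
  I.filter fun i => (∃ j ∈ J, (i, j) ∈ S) ∧ ∃ j ∈ J, (i, j) ∉ S

lemma card_mixedRows_le {Λ S : Finset (ℤ × ℤ)} {a b : ℤ} {J : Finset ℤ}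
    (hΛ : Ico a b ×ˢ J ⊆ Λ) : #(mixedRows (Ico a b) J S) ≤ #(edgeBoundary Λ S) :=
  card_mixed_lines_le_card_edgeBoundary J (fun j i => (i, j))
    (fun _ hj _ hi => hΛ (mem_product.2 ⟨hi, hj⟩)) (fun _ _ => by simp)
    (fun _ _ _ _ h => (Prod.ext_iff.1 h).2)

lemma card_mixedCols_le {Λ S : Finset (ℤ × ℤ)} {I : Finset ℤ} {c d : ℤ}
    (hΛ : I ×ˢ Ico c d ⊆ Λ) : #(mixedCols I (Ico c d) S) ≤ #(edgeBoundary Λ S) :=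
  card_mixed_lines_le_card_edgeBoundary I Prod.mk
    (fun _ hi _ hj => hΛ (mem_product.2 ⟨hi, hj⟩)) (fun _ _ => by simp)
    (fun _ _ _ _ h => (Prod.ext_iff.1 h).1)

theorem min_card_le_sq_card_edgeBoundary {n : ℕ} {x : ℤ × ℤ} {S : Finset (ℤ × ℤ)}
    (hS : S ⊆ cube2 n x) : min #S #(cube2 n x \ S) ≤ #(edgeBoundary (cube2 n x) S) ^ 2 := by
  set I := Ico ((n : ℤ) * x.1) (n * (x.1 + 1))
  set J := Ico ((n : ℤ) * x.2) (n * (x.2 + 1))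
  have hΛ : cube2 n x = I ×ˢ J := rfl
  set E := #(edgeBoundary (cube2 n x) S)
  have hR : #(mixedRows I J S) ≤ E := card_mixedRows_le hΛ.ge
  have hC : #(mixedCols I J S) ≤ E := card_mixedCols_le hΛ.ge
  have hCR : #(mixedCols I J S ×ˢ mixedRows I J S) ≤ E ^ 2 := by
    rw [card_product, sq]
    exact Nat.mul_le_mul hC hR
  by_cases hfullS : (∃ j ∈ J, ∀ i ∈ I, (i, j) ∈ S) ∨ ∃ i ∈ I, ∀ j ∈ J, (i, j) ∈ S
  · by_cases hfullT : (∃ j ∈ J, ∀ i ∈ I, (i, j) ∉ S) ∨ ∃ i ∈ I, ∀ j ∈ J, (i, j) ∉ S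
    · -- monochromatic lines of both colours must be parallel, so every crossing line is mixed
      have hnE : n ≤ E := by
        rcases hfullS with ⟨j, hj, hjS⟩ | ⟨i, hi, hiS⟩ <;>
          rcases hfullT with ⟨j', hj', hj'S⟩ | ⟨i', hi', hi'S⟩
        · refine le_trans ?_ ((card_le_card fun i hi => mem_filter.2 ⟨hi, ⟨j, hj, hjS i hi⟩,
            j', hj', hj'S i hi⟩).trans hC)
          simp [I, ← mul_sub]
        · exact absurd (hjS i' hi') (hi'S j hj)
        · exact absurd (hiS j' hj') (hj'S i hi)
        · refine le_trans ?_ ((card_le_card fun j hj => mem_filter.2 ⟨hj, ⟨i, hi, hiS j hj⟩,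
            i', hi', hi'S j hj⟩).trans hR)
          simp [J, ← mul_sub]
      calc min #S #(cube2 n x \ S) ≤ #S := min_le_left _ _
        _ ≤ n ^ 2 := card_cube2 n x ▸ card_le_card hS
        _ ≤ E ^ 2 := Nat.pow_le_pow_left hnE 2
    · push Not at hfullT
      refine (min_le_right _ _).trans ((card_le_card fun g hg => ?_).trans hCR)
      rw [hΛ, mem_sdiff, mem_product] at hg
      exact mem_product.2 ⟨mem_filter.2 ⟨hg.1.1, hfullT.2 g.1 hg.1.1, g.2, hg.1.2, hg.2⟩,
        mem_filter.2 ⟨hg.1.2, hfullT.1 g.2 hg.1.2, g.1, hg.1.1, hg.2⟩⟩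
  · push Not at hfullS
    refine (min_le_left _ _).trans ((card_le_card fun g hg => ?_).trans hCR)
    have hgΛ := mem_product.1 (hΛ ▸ hS hg)
    exact mem_product.2 ⟨mem_filter.2 ⟨hgΛ.1, ⟨g.2, hgΛ.2, hg⟩, hfullS.2 g.1 hgΛ.1⟩,
      mem_filter.2 ⟨hgΛ.2, ⟨g.1, hgΛ.1, hg⟩, hfullS.1 g.2 hgΛ.2⟩⟩

end Isoperimetry

section Scale

variable {ρ n : ℕ} {x : ℤ × ℤ} {A B : Finset (ℤ × ℤ)}

noncomputable def highBlocks (A : Finset (ℤ × ℤ)) (ρ n : ℕ) (x : ℤ × ℤ) : Finset (ℤ × ℤ) :=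
  (cube2 n x).filter fun g => 3 * ρ ^ 2 < 4 * #(A ∩ cube2 ρ g)

lemma card_le_min_highBlocks (hρ : 0 < ρ) (hAB : A ∪ B = cube2 (n * ρ) x)
    (hdisj : Disjoint A B) (hle : #A ≤ #B) (hH : #A ≤ 2 * ρ ^ 2 * #(highBlocks A ρ n x)) :
    #A ≤ 2 * ρ ^ 2 * min #(highBlocks A ρ n x) #(cube2 n x \ highBlocks A ρ n x) := by
  set H := highBlocks A ρ n x
  have hHΛ : H ⊆ cube2 n x := filter_subset _ _
  have hmass : 3 * (ρ ^ 2 * #H) ≤ 4 * #A := by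
    calc 3 * (ρ ^ 2 * #H) = ∑ _g ∈ H, 3 * ρ ^ 2 := by rw [sum_const, smul_eq_mul]; ring
      _ ≤ ∑ g ∈ H, 4 * #(A ∩ cube2 ρ g) := sum_le_sum fun g hg => (mem_filter.1 hg).2.le
      _ ≤ ∑ g ∈ cube2 n x, 4 * #(A ∩ cube2 ρ g) := sum_le_sum_of_subset hHΛ
      _ = 4 * #A := by
        rw [← mul_sum, sum_card_inter_cube2 hρ (hAB ▸ subset_union_left)]
  have htotal : #A + #B = ρ ^ 2 * n ^ 2 := by
    rw [← card_union_of_disjoint hdisj, hAB, card_cube2]; ring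
  have hcompl : ρ ^ 2 * #(cube2 n x \ H) = ρ ^ 2 * n ^ 2 - ρ ^ 2 * #H := by
    rw [card_sdiff_of_subset hHΛ, card_cube2, Nat.mul_sub]
  rcases min_choice #H #(cube2 n x \ H) with h | h <;> rw [h]
  · exact hH
  · rw [mul_assoc, hcompl]
    rw [mul_assoc] at hH
    omega

/-- Across a boundary edge of the high blocks, `A` fills more than `3/4` of one block and `B`
at least `1/4` of the other. -/
lemma le_card_mul_card_of_mem_edgeBoundary_highBlocks (hρ : 0 < ρ)
    (hAB : A ∪ B = cube2 (n * ρ) x) (hdisj : Disjoint A B) {e : (ℤ × ℤ) × (ℤ × ℤ)}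
    (he : e ∈ edgeBoundary (cube2 n x) (highBlocks A ρ n x)) :
    3 * ρ ^ 2 * ρ ^ 2 ≤ 16 * (#(A ∩ cube2 ρ e.1) * #(B ∩ cube2 ρ e.2)) := by
  simp only [edgeBoundary, mem_filter, mem_product, mem_sdiff, highBlocks, not_and,
    not_lt] at he
  obtain ⟨⟨⟨-, hhigh⟩, hΛ, hlow⟩, -⟩ := he
  have := card_inter_cube2_add_card_inter_cube2 hρ hAB hdisj hΛ
  calc 3 * ρ ^ 2 * ρ ^ 2 ≤ (4 * #(A ∩ cube2 ρ e.1)) * (4 * #(B ∩ cube2 ρ e.2)) :=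
        Nat.mul_le_mul hhigh.le (by have := hlow hΛ; omega)
    _ = 16 * (#(A ∩ cube2 ρ e.1) * #(B ∩ cube2 ρ e.2)) := by ring

lemma pow_six_mul_card_le_of_many_highBlocks (hρ : 0 < ρ) (hAB : A ∪ B = cube2 (n * ρ) x)
    (hdisj : Disjoint A B) (hle : #A ≤ #B) (hH : #A ≤ 2 * ρ ^ 2 * #(highBlocks A ρ n x)) :
    ρ ^ 6 * #A ≤ 256 * #(closePairs A B (16 * ρ ^ 2)) ^ 2 := by
  set H := highBlocks A ρ n x
  set E := #(edgeBoundary (cube2 n x) H)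
  set P := #(closePairs A B (16 * ρ ^ 2))
  have hiso : #A ≤ 2 * ρ ^ 2 * E ^ 2 := (card_le_min_highBlocks hρ hAB hdisj hle hH).trans
    (Nat.mul_le_mul_left _ (min_card_le_sq_card_edgeBoundary (filter_subset _ _)))
  have hpairs : 3 * ρ ^ 2 * ρ ^ 2 * E ≤ 16 * P := by
    calc 3 * ρ ^ 2 * ρ ^ 2 * E = ∑ _e ∈ edgeBoundary (cube2 n x) H, 3 * ρ ^ 2 * ρ ^ 2 := by
          rw [sum_const, smul_eq_mul, mul_comm]
      _ ≤ ∑ e ∈ edgeBoundary (cube2 n x) H, 16 * (#(A ∩ cube2 ρ e.1) * #(B ∩ cube2 ρ e.2)) :=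
          sum_le_sum fun e he => le_card_mul_card_of_mem_edgeBoundary_highBlocks hρ hAB hdisj he
      _ ≤ 16 * P := by
          rw [← mul_sum]
          refine Nat.mul_le_mul_left _ (sum_card_mul_card_le_card_closePairs hρ (by omega) _ ?_)
          intro e he
          have := (mem_filter.1 he).2
          omega
  calc ρ ^ 6 * #A ≤ ρ ^ 6 * (2 * ρ ^ 2 * E ^ 2) := Nat.mul_le_mul_left _ hiso
    _ ≤ (3 * ρ ^ 2 * ρ ^ 2 * E) ^ 2 := by ring_nf; omega
    _ ≤ (16 * P) ^ 2 := Nat.pow_le_pow_left hpairs 2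
    _ = 256 * P ^ 2 := by ring

lemma pow_six_mul_card_le_of_few_highBlocks (hρ : 0 < ρ) (hAB : A ∪ B = cube2 (n * ρ) x)
    (hdisj : Disjoint A B) (hρA : ρ ^ 2 ≤ #A) (hH : 2 * ρ ^ 2 * #(highBlocks A ρ n x) < #A) :
    ρ ^ 6 * #A ≤ 256 * #(closePairs A B (16 * ρ ^ 2)) ^ 2 := by
  set a := fun g => #(A ∩ cube2 ρ g)
  set b := fun g => #(B ∩ cube2 ρ g)
  set P := #(closePairs A B (16 * ρ ^ 2))
  set Low := (cube2 n x).filter fun g => ¬ 3 * ρ ^ 2 < 4 * a g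
  have hsplit : ∑ g ∈ highBlocks A ρ n x, a g + ∑ g ∈ Low, a g = #A := by
    rw [highBlocks, sum_filter_add_sum_filter_not,
      sum_card_inter_cube2 hρ (hAB ▸ subset_union_left)]
  have hhigh : ∑ g ∈ highBlocks A ρ n x, a g ≤ ρ ^ 2 * #(highBlocks A ρ n x) := by
    rw [mul_comm, ← smul_eq_mul, ← sum_const]
    refine sum_le_sum fun g hg => ?_
    have : a g + b g = ρ ^ 2 :=
      card_inter_cube2_add_card_inter_cube2 hρ hAB hdisj (mem_filter.1 hg).1
    omega
  have hlow : ∀ g ∈ Low, ρ ^ 2 * a g ≤ 4 * (a g * b g) := by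
    intro g hg
    obtain ⟨hΛ, hg⟩ := mem_filter.1 hg
    have : a g + b g = ρ ^ 2 := card_inter_cube2_add_card_inter_cube2 hρ hAB hdisj hΛ
    calc ρ ^ 2 * a g ≤ (4 * b g) * a g := Nat.mul_le_mul_right _ (by omega)
      _ = 4 * (a g * b g) := by ring
  have hdiag : ∑ g ∈ Low, a g * b g ≤ P := by
    have := sum_card_mul_card_le_card_closePairs (A := A) (B := B) hρ (R := 16 * ρ ^ 2)
      (by omega) (Low.image fun g => (g, g)) fun e he => by
        obtain ⟨g, -, rfl⟩ := mem_image.1 he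
        simp
    rwa [sum_image fun g _ g' _ h => congrArg Prod.fst h] at this
  have hhalf : #A ≤ 2 * ∑ g ∈ Low, a g := by
    rw [mul_assoc] at hH
    omega
  have hρP : ρ ^ 2 * #A ≤ 8 * P := by
    calc ρ ^ 2 * #A ≤ 2 * ∑ g ∈ Low, ρ ^ 2 * a g := by
          rw [← mul_sum, mul_left_comm]; exact Nat.mul_le_mul_left _ hhalf
      _ ≤ 2 * ∑ g ∈ Low, 4 * (a g * b g) := Nat.mul_le_mul_left _ (sum_le_sum hlow)
      _ ≤ 8 * P := by rw [← mul_sum]; omega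
  calc ρ ^ 6 * #A = ρ ^ 4 * (ρ ^ 2 * #A) := by ring
    _ ≤ ρ ^ 4 * (#A * #A) := Nat.mul_le_mul_left _ (Nat.mul_le_mul_right _ hρA)
    _ = (ρ ^ 2 * #A) ^ 2 := by ring
    _ ≤ (8 * P) ^ 2 := Nat.pow_le_pow_left hρP 2
    _ ≤ 256 * P ^ 2 := by ring_nf; omega

theorem pow_six_mul_card_le_sq_card_closePairs (hρ : 0 < ρ) (hAB : A ∪ B = cube2 (n * ρ) x)
    (hdisj : Disjoint A B) (hle : #A ≤ #B) (hρA : ρ ^ 2 ≤ #A) :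
    ρ ^ 6 * #A ≤ 256 * #(closePairs A B (16 * ρ ^ 2)) ^ 2 := by
  rcases le_or_gt #A (2 * ρ ^ 2 * #(highBlocks A ρ n x)) with h | h
  · exact pow_six_mul_card_le_of_many_highBlocks hρ hAB hdisj hle h
  · exact pow_six_mul_card_le_of_few_highBlocks hρ hAB hdisj hρA h

end Scale

section Assembly

variable {e : ℕ} {x : ℤ × ℤ} {A B : Finset (ℤ × ℤ)}

lemma eight_pow_mul_sqrt_le_card_closePairs (hAB : A ∪ B = cube2 (2 ^ e) x)
    (hdisj : Disjoint A B) (hle : #A ≤ #B) {k : ℕ} (hk : 64 ^ k ≤ #A) :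
    8 ^ k * Real.sqrt #A ≤ 16 * #(closePairs A B (4 ^ (k + 2))) := by
  have htotal : #A + #B = 4 ^ e := by
    rw [← card_union_of_disjoint hdisj, hAB, card_cube2, ← pow_mul, mul_comm, pow_mul]; norm_num
  have h4k : 4 ^ k ≤ #A := (Nat.pow_le_pow_left (by norm_num) k).trans hk
  have hke : k ≤ e := by
    by_contra! h
    have := Nat.pow_lt_pow_right (show 1 < 4 by norm_num) h
    omega
  have hρ : (2 ^ k) ^ 2 = 4 ^ k := by rw [← pow_mul, mul_comm, pow_mul]; norm_num
  have hnρ : 2 ^ (e - k) * 2 ^ k = 2 ^ e := by rw [← pow_add, Nat.sub_add_cancel hke]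
  have key := pow_six_mul_card_le_sq_card_closePairs (n := 2 ^ (e - k)) (pow_pos two_pos k)
    (hnρ ▸ hAB) hdisj hle (hρ ▸ h4k)
  have h64 : (2 ^ k) ^ 6 = 64 ^ k := by rw [← pow_mul, mul_comm, pow_mul]; norm_num
  rw [hρ, h64, show 16 * 4 ^ k = 4 ^ (k + 2) by ring] at key
  have key' : (8 ^ k * Real.sqrt #A) ^ 2 ≤ (16 * (#(closePairs A B (4 ^ (k + 2))) : ℝ)) ^ 2 := by
    rw [mul_pow, mul_pow, Real.sq_sqrt (Nat.cast_nonneg _), ← pow_mul, mul_comm k, pow_mul]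
    norm_num
    exact_mod_cast key
  exact (pow_le_pow_iff_left₀ (by positivity) (by positivity) two_ne_zero).1 key'

lemma sum_Jint2_nonneg (A B : Finset (ℤ × ℤ)) : 0 ≤ ∑ p ∈ A, ∑ q ∈ B, Jint2 3 p q :=
  sum_nonneg fun _ _ => sum_nonneg fun _ _ => Real.rpow_nonneg (Real.sqrt_nonneg _) _

lemma mul_sqrt_le_sum_Jint2 (hAB : A ∪ B = cube2 (2 ^ e) x) (hdisj : Disjoint A B)
    (hle : #A ≤ #B) (hpos : 0 < #A) :
    7 / 8192 * ((Nat.log 64 #A + 1) * Real.sqrt #A) ≤ ∑ p ∈ A, ∑ q ∈ B, Jint2 3 p q := by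
  set K := Nat.log 64 #A
  set P := fun j => (#(closePairs A B (4 ^ j)) : ℝ)
  have hscale : ∀ k < K + 1, Real.sqrt #A / 1024 ≤ (1 / 8) ^ (2 + k) * P (2 + k) := by
    intro k hk
    have h := eight_pow_mul_sqrt_le_card_closePairs hAB hdisj hle
      ((Nat.pow_le_pow_right (by norm_num) (Nat.lt_succ_iff.1 hk)).trans
        (Nat.pow_log_le_self 64 hpos.ne'))
    rw [add_comm 2 k]
    calc Real.sqrt #A / 1024 = (1 / 8) ^ (k + 2) * (8 ^ k * Real.sqrt #A / 16) := by
          rw [pow_add, one_div_pow, one_div_pow]; field_simp; ring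
      _ ≤ (1 / 8) ^ (k + 2) * P (k + 2) := by gcongr; linarith
  calc 7 / 8192 * ((K + 1) * Real.sqrt #A)
      = 7 / 8 * ∑ _k ∈ range (K + 1), Real.sqrt #A / 1024 := by
        rw [sum_const, card_range, nsmul_eq_mul]; push_cast; ring
    _ ≤ 7 / 8 * ∑ k ∈ range (K + 1), (1 / 8) ^ (2 + k) * P (2 + k) := by
        gcongr with k hk
        exact hscale k (mem_range.1 hk)
    _ ≤ 7 / 8 * ∑ j ∈ range (2 + (K + 1)), (1 / 8) ^ j * P j := by
        rw [sum_range_add _ 2 (K + 1)]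
        gcongr
        exact le_add_of_nonneg_left (sum_nonneg fun _ _ => by positivity)
    _ ≤ _ := dyadic_sum_card_closePairs_le_sum_Jint2 hdisj _

lemma Real.log_natCast_add_one_le (m : ℕ) : Real.log (m + 1) ≤ 63 * (Nat.log 64 m + 1) := by
  have hm : (m : ℝ) + 1 ≤ 64 ^ (Nat.log 64 m + 1) := by
    exact_mod_cast Nat.lt_pow_succ_log_self (by norm_num) m
  calc Real.log (m + 1) ≤ Real.log (64 ^ (Nat.log 64 m + 1)) :=
        Real.log_le_log (by positivity) hm
    _ = (Nat.log 64 m + 1) * Real.log 64 := by rw [Real.log_pow]; push_cast; ring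
    _ ≤ 63 * (Nat.log 64 m + 1) := by
        rw [mul_comm]
        gcongr
        linarith [Real.log_le_sub_one_of_pos (show (0 : ℝ) < 64 by norm_num)]

lemma Real.sqrt_add_one_le_two_mul_sqrt {t : ℝ} (ht : 1 ≤ t) :
    Real.sqrt (t + 1) ≤ 2 * Real.sqrt t := by
  rw [show (2 : ℝ) = Real.sqrt 4 by rw [show (4 : ℝ) = 2 ^ 2 by norm_num, Real.sqrt_sq two_pos.le],
    ← Real.sqrt_mul (by norm_num)]
  exact Real.sqrt_le_sqrt (by linarith)

lemma sqrt_mul_log_le_sum_Jint2 (hAB : A ∪ B = cube2 (2 ^ e) x) (hdisj : Disjoint A B)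
    (hle : #A ≤ #B) :
    1 / 2 ^ 18 * Real.sqrt (#A + 1) * Real.log (#A + 1) ≤ ∑ p ∈ A, ∑ q ∈ B, Jint2 3 p q := by
  rcases Nat.eq_zero_or_pos #A with h0 | hpos
  · simpa [h0] using sum_Jint2_nonneg A B
  have hA : (1 : ℝ) ≤ #A := by exact_mod_cast hpos
  have hK : 0 ≤ ((Nat.log 64 #A : ℝ) + 1) * Real.sqrt #A := by positivity
  calc 1 / 2 ^ 18 * Real.sqrt (#A + 1) * Real.log (#A + 1)
      ≤ 1 / 2 ^ 18 * (2 * Real.sqrt #A) * (63 * (Nat.log 64 #A + 1)) := by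
        gcongr
        · exact Real.log_nonneg (by linarith)
        · exact Real.sqrt_add_one_le_two_mul_sqrt hA
        · exact Real.log_natCast_add_one_le _
    _ ≤ 7 / 8192 * ((Nat.log 64 #A + 1) * Real.sqrt #A) := by nlinarith
    _ ≤ _ := mul_sqrt_le_sum_Jint2 hAB hdisj hle hpos

end Assembly

theorem stmt9_general (r : ℕ) :
    ∃ b₈ : ℝ, 0 < b₈ ∧ ∀ (L : ℕ), 1 ≤ L → ∀ (x : ℤ × ℤ) (σ : ℤ × ℤ → ℤ),
      (∀ z, σ z = 1 ∨ σ z = -1) → ∀ m : ℕ,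
      m = min (((cube2 (2 ^ (r * L)) x).filter (fun z => σ z = 1)).card)
              (((cube2 (2 ^ (r * L)) x).filter (fun z => σ z = -1)).card) →
      b₈ * Real.sqrt ((m : ℝ) + 1) * Real.log ((m : ℝ) + 1) ≤
        ∑ p ∈ (cube2 (2 ^ (r * L)) x).filter (fun z => σ z = 1),
          ∑ q ∈ (cube2 (2 ^ (r * L)) x).filter (fun z => σ z = -1),
            Jint2 3 p q := by
  refine ⟨1 / 2 ^ 18, by positivity, fun L _ x σ hσ m hm => ?_⟩
  set C := cube2 (2 ^ (r * L)) x
  have hdisj : Disjoint (C.filter (σ · = 1)) (C.filter (σ · = -1)) :=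
    disjoint_filter.2 fun z _ h₁ h₂ => by omega
  have hunion : C.filter (σ · = 1) ∪ C.filter (σ · = -1) = C := by
    rw [← filter_or, filter_true_of_mem fun z _ => hσ z]
  subst hm
  rcases le_total #(C.filter (σ · = 1)) #(C.filter (σ · = -1)) with h | h
  · rw [min_eq_left h]
    exact sqrt_mul_log_le_sum_Jint2 hunion hdisj h
  · rw [min_eq_right h, sum_comm]
    rw [union_comm] at hunion
    exact (sqrt_mul_log_le_sum_Jint2 hunion hdisj.symm h).trans_eq
      (sum_congr rfl fun _ _ => sum_congr rfl fun _ _ => Jint2_comm 3 _ _)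

theorem stmt9 (r : ℕ) (hr : 4 < r) :
    ∃ b₈ : ℝ, 0 < b₈ ∧ ∀ (L : ℕ), 1 ≤ L → ∀ (x : ℤ × ℤ) (σ : ℤ × ℤ → ℤ),
      (∀ z, σ z = 1 ∨ σ z = -1) → ∀ m : ℕ,
      m = min (((cube2 (2 ^ (r * L)) x).filter (fun z => σ z = 1)).card)
              (((cube2 (2 ^ (r * L)) x).filter (fun z => σ z = -1)).card) →
      b₈ * Real.sqrt ((m : ℝ) + 1) * Real.log ((m : ℝ) + 1) ≤
        ∑ p ∈ (cube2 (2 ^ (r * L)) x).filter (fun z => σ z = 1),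
          ∑ q ∈ (cube2 (2 ^ (r * L)) x).filter (fun z => σ z = -1),
            Jint2 3 p q :=
  stmt9_general r
end

section
/- Let r > 4 and for each ℓ ≥ 0 let ∂𝔠_ℓ(A) denote the set of edge-adjacent pairs (C, C′) of ℓ-cubes with |C ∩ A| ≥ |C|/2 and |C′ ∩ A| < |C′|/2. Define Q_ℓ(A) = ∑_{(C,C′) ∈ ∂𝔠_ℓ(A)} J(A ∩ Ĉ, Aᶜ ∩ Ĉ′), where Ĉ is the cube C shrunk by an outer layer of thickness 2^{r(ℓ-1)}. Then for every finite A ⊂ ℤ², ∑_{ℓ ≥ 0} Q_ℓ(A) ≤ J(A, Aᶜ). -/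
/-- The `ℓ`-cube indexed by `x`, shrunk by an outer layer of thickness `2^{r(ℓ-1)}`. -/
noncomputable def hatcube2 (r ℓ : ℕ) (x : ℤ × ℤ) : Finset (ℤ × ℤ) :=
  Finset.Ico ((2 ^ (r * ℓ) : ℤ) * x.1 + 2 ^ (r * ℓ) / 2 ^ r)
             ((2 ^ (r * ℓ) : ℤ) * (x.1 + 1) - 2 ^ (r * ℓ) / 2 ^ r) ×ˢ
  Finset.Ico ((2 ^ (r * ℓ) : ℤ) * x.2 + 2 ^ (r * ℓ) / 2 ^ r)
             ((2 ^ (r * ℓ) : ℤ) * (x.2 + 1) - 2 ^ (r * ℓ) / 2 ^ r)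

/-- `Q_ℓ(A)`: sum over edge-boundary pairs `(C, C')` of admissible/non-admissible
`ℓ`-cubes of the interaction between `A ∩ Ĉ` and `Aᶜ ∩ Ĉ'`. -/
noncomputable def Qlev (r : ℕ) (α : ℝ) (A : Finset (ℤ × ℤ)) (ℓ : ℕ) : ℝ :=
  ∑' x : ℤ × ℤ, ∑' x' : ℤ × ℤ,
    if |x.1 - x'.1| + |x.2 - x'.2| = 1 ∧
        (cube2 (2 ^ (r * ℓ)) x).card ≤
          2 * ((cube2 (2 ^ (r * ℓ)) x).filter (· ∈ A)).card ∧
        2 * ((cube2 (2 ^ (r * ℓ)) x').filter (· ∈ A)).card <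
          (cube2 (2 ^ (r * ℓ)) x').card
    then ∑ p ∈ (hatcube2 r ℓ x).filter (· ∈ A),
           ∑ q ∈ (hatcube2 r ℓ x').filter (· ∉ A), Jint2 α p q
    else 0

/-!
`Q_ℓ(A)` is a sum of `J(p, q)` over pairs `p ∈ A`, `q ∉ A` lying in the shrunk cubes of an
edge-boundary pair of `ℓ`-cubes, so it suffices that no pair `(p, q)` is counted at two
scales `ℓ < k`. If it were, `p` would lie in a shrunk `k`-cube, at distance at least
`2^{r(k-1)} ≥ 2^{rℓ}` from its boundary. As the `ℓ`-cubes tile the `k`-cubes, the `ℓ`-cube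
of `q`, adjacent to that of `p`, then lies in the `k`-cube of `p`, whereas at scale `k` the
cubes of `p` and `q` are adjacent, hence distinct.
-/

open Finset Function

lemma Int.ediv_mul_eq_of_abs_ediv_sub_le_one {s m X a b : ℤ} (hs : 0 < s) (hm : 0 < m)
    (hlo : s * m * X + s ≤ a) (hhi : a < s * m * (X + 1) - s) (hab : |a / s - b / s| ≤ 1) :
    b / (s * m) = X := by
  have ha₁ : s * (a / s) ≤ a := Int.mul_ediv_self_le hs.ne'
  have ha₂ : a < s * (a / s) + s := Int.lt_mul_ediv_self_add hs
  have hX₁ : m * X < a / s := by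
    by_contra! h
    nlinarith [mul_le_mul_of_nonneg_left h hs.le]
  have hX₂ : a / s + 1 < m * X + m := by
    by_contra! h
    nlinarith [mul_le_mul_of_nonneg_left h hs.le]
  rw [← Int.ediv_ediv_of_nonneg hs.le, Int.ediv_eq_iff_of_pos hm]
  rw [abs_le] at hab
  constructor <;> linarith

lemma Jint2_nonneg (α : ℝ) (p q : ℤ × ℤ) : 0 ≤ Jint2 α p q :=
  Real.rpow_nonneg (Real.sqrt_nonneg _) _

lemma norm_sub_le_sqrt (p q : ℤ × ℤ) :
    ‖p - q‖ ≤ √(((p.1 - q.1 : ℤ) : ℝ) ^ 2 + ((p.2 - q.2 : ℤ) : ℝ) ^ 2) := by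
  rw [Prod.norm_def, Prod.fst_sub, Prod.snd_sub, Int.norm_eq_abs, Int.norm_eq_abs]
  refine max_le (Real.abs_le_sqrt ?_) (Real.abs_le_sqrt ?_) <;> nlinarith

lemma summable_Jint2 {α : ℝ} (hα : 2 < α) (p : ℤ × ℤ) : Summable (Jint2 α p) := by
  have hnorm : Summable fun z : ℤ × ℤ => ‖z‖ ^ (-α) := by
    refine (finTwoArrowEquiv ℤ).summable_iff.mp ?_
    convert EisensteinSeries.summable_one_div_norm_rpow hα using 3 with z
    rw [EisensteinSeries.norm_eq_max_natAbs, Function.comp_apply, Prod.norm_def]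
    simp [Int.norm_eq_abs]
  have hshift : Summable fun q : ℤ × ℤ => ‖p - q‖ ^ (-α) :=
    (Equiv.subLeft p).summable_iff.mpr hnorm
  refine hshift.of_nonneg_of_le (Jint2_nonneg α p) fun q => ?_
  rcases eq_or_ne p q with rfl | hpq
  · simp [Jint2, Real.zero_rpow (by linarith : -α ≠ 0)]
  · exact Real.rpow_le_rpow_of_nonpos (norm_pos_iff.mpr (sub_ne_zero.mpr hpq))
      (norm_sub_le_sqrt p q) (by linarith)

lemma sum_le_tsum_ite_of_forall_notMem {ι : Type*} [DecidableEq ι] {f : ι → ℝ}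
    (hf : ∀ i, 0 ≤ f i) (hs : Summable f) {A S : Finset ι} (hSA : ∀ i ∈ S, i ∉ A) :
    ∑ i ∈ S, f i ≤ ∑' i, if i ∈ A then 0 else f i := by
  have hnonneg : ∀ i, 0 ≤ if i ∈ A then 0 else f i := fun i => by
    split_ifs
    exacts [le_rfl, hf i]
  calc ∑ i ∈ S, f i = ∑ i ∈ S, if i ∈ A then 0 else f i :=
        sum_congr rfl fun i hi => (if_neg (hSA i hi)).symm
    _ ≤ _ := Summable.sum_le_tsum S (fun i _ => hnonneg i)
        (hs.of_nonneg_of_le hnonneg fun i => by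
          split_ifs
          exacts [hf i, le_rfl])

def cubeIndex (s : ℕ) (p : ℤ × ℤ) : ℤ × ℤ := (p.1 / s, p.2 / s)

lemma mem_cube2_iff {s : ℕ} (hs : 0 < s) {p x : ℤ × ℤ} :
    p ∈ cube2 s x ↔ cubeIndex s p = x := by
  have hs' : (0 : ℤ) < s := by exact_mod_cast hs
  simp only [cube2, mem_product, mem_Ico, cubeIndex, Prod.ext_iff,
    Int.ediv_eq_iff_of_pos hs']
  constructor <;> rintro ⟨⟨h₁, h₂⟩, h₃, h₄⟩ <;> refine ⟨⟨?_, ?_⟩, ?_, ?_⟩ <;> linarith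

lemma hatcube2_subset_cube2 (r ℓ : ℕ) (x : ℤ × ℤ) :
    hatcube2 r ℓ x ⊆ cube2 (2 ^ (r * ℓ)) x := by
  intro p hp
  have hd : (0 : ℤ) ≤ 2 ^ (r * ℓ) / 2 ^ r := by positivity
  simp only [hatcube2, cube2, mem_product, mem_Ico, Nat.cast_pow, Nat.cast_ofNat] at hp ⊢
  obtain ⟨⟨h₁, h₂⟩, h₃, h₄⟩ := hp
  exact ⟨⟨by linarith, by linarith⟩, by linarith, by linarith⟩

lemma cubeIndex_eq_of_mem_hatcube2 {r ℓ : ℕ} {p x : ℤ × ℤ} (hp : p ∈ hatcube2 r ℓ x) :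
    cubeIndex (2 ^ (r * ℓ)) p = x :=
  (mem_cube2_iff (by positivity)).mp (hatcube2_subset_cube2 r ℓ x hp)

lemma two_pow_le_two_pow_ediv {r ℓ k : ℕ} (hlk : ℓ < k) :
    (2 : ℤ) ^ (r * ℓ) ≤ 2 ^ (r * k) / 2 ^ r := by
  have hk : r * ℓ + r ≤ r * k := by nlinarith
  rw [show r * k = r + (r * k - r) by omega, pow_add,
    Int.mul_ediv_cancel_left _ (by positivity)]
  exact pow_le_pow_right₀ (by norm_num) (by omega)

/-- Cubes are nested, so a point at distance `≥ 2^{rℓ}` from the boundary of its `k`-cube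
has every point of the neighbouring `ℓ`-cubes in the same `k`-cube. -/
lemma cubeIndex_eq_of_mem_hatcube2_of_abs_le {r ℓ k : ℕ} (hlk : ℓ < k) {p q x : ℤ × ℤ}
    (hp : p ∈ hatcube2 r k x)
    (h₁ : |(cubeIndex (2 ^ (r * ℓ)) p).1 - (cubeIndex (2 ^ (r * ℓ)) q).1| ≤ 1)
    (h₂ : |(cubeIndex (2 ^ (r * ℓ)) p).2 - (cubeIndex (2 ^ (r * ℓ)) q).2| ≤ 1) :
    cubeIndex (2 ^ (r * k)) q = x := by
  have hsm : (2 : ℤ) ^ (r * k) = 2 ^ (r * ℓ) * 2 ^ (r * k - r * ℓ) := by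
    rw [← pow_add]; congr 1; have := Nat.mul_le_mul_left r hlk.le; omega
  have hd := two_pow_le_two_pow_ediv (r := r) hlk
  simp only [hatcube2, mem_product, mem_Ico] at hp
  simp only [cubeIndex, Nat.cast_pow, Nat.cast_ofNat] at h₁ h₂ ⊢
  obtain ⟨⟨hp₁, hp₁'⟩, hp₂, hp₂'⟩ := hp
  generalize (2 : ℤ) ^ (r * k) / 2 ^ r = d at hd hp₁ hp₁' hp₂ hp₂'
  rw [hsm] at hp₁ hp₁' hp₂ hp₂' ⊢
  exact Prod.ext
    (Int.ediv_mul_eq_of_abs_ediv_sub_le_one (by positivity) (by positivity)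
      (by linarith) (by linarith) h₁)
    (Int.ediv_mul_eq_of_abs_ediv_sub_le_one (by positivity) (by positivity)
      (by linarith) (by linarith) h₂)

/-- `(C_x, C_{x'}) ∈ ∂𝔠_ℓ(A)`. Reducible, so that its decidability instance is the one
unfolded from `Qlev`. -/
abbrev IsBoundaryPair (r : ℕ) (A : Finset (ℤ × ℤ)) (ℓ : ℕ) (x x' : ℤ × ℤ) : Prop :=
  |x.1 - x'.1| + |x.2 - x'.2| = 1 ∧
    (cube2 (2 ^ (r * ℓ)) x).card ≤ 2 * ((cube2 (2 ^ (r * ℓ)) x).filter (· ∈ A)).card ∧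
    2 * ((cube2 (2 ^ (r * ℓ)) x').filter (· ∈ A)).card < (cube2 (2 ^ (r * ℓ)) x').card

lemma mem_Icc_of_isBoundaryPair {r : ℕ} {A : Finset (ℤ × ℤ)} {ℓ : ℕ} {x x' : ℤ × ℤ}
    (h : IsBoundaryPair r A ℓ x x') : x' ∈ Icc (x - 1) (x + 1) := by
  obtain ⟨h, -⟩ := h
  have h₁ := abs_nonneg (x.1 - x'.1)
  have h₂ := abs_nonneg (x.2 - x'.2)
  have h₁' := abs_le.mp (show |x.1 - x'.1| ≤ 1 by linarith)
  have h₂' := abs_le.mp (show |x.2 - x'.2| ≤ 1 by linarith)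
  simp only [mem_Icc, Prod.le_def, Prod.fst_sub, Prod.snd_sub, Prod.fst_add, Prod.snd_add,
    Prod.fst_one, Prod.snd_one]
  omega

/-- The points `q ∉ A` such that `(p, q)` is counted in `Q_ℓ(A)`. -/
noncomputable def partners (r : ℕ) (A : Finset (ℤ × ℤ)) (ℓ : ℕ) (p : ℤ × ℤ) :
    Finset (ℤ × ℤ) :=
  let x := cubeIndex (2 ^ (r * ℓ)) p
  if p ∈ hatcube2 r ℓ x then
    ((Icc (x - 1) (x + 1)).filter (IsBoundaryPair r A ℓ x)).biUnion
      fun x' => (hatcube2 r ℓ x').filter (· ∉ A)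
  else ∅

lemma disjoint_hatcube2 {r ℓ : ℕ} {x y : ℤ × ℤ} (h : x ≠ y) :
    Disjoint (hatcube2 r ℓ x) (hatcube2 r ℓ y) :=
  disjoint_left.mpr fun _ hx hy =>
    h ((cubeIndex_eq_of_mem_hatcube2 hx).symm.trans (cubeIndex_eq_of_mem_hatcube2 hy))

lemma Qlev_eq_sum_partners (r : ℕ) (α : ℝ) (A : Finset (ℤ × ℤ)) (ℓ : ℕ) :
    Qlev r α A ℓ = ∑ p ∈ A, ∑ q ∈ partners r A ℓ p, Jint2 α p q := by
  have hcube : ∀ x, (∑' x', if IsBoundaryPair r A ℓ x x' then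
      ∑ p ∈ (hatcube2 r ℓ x).filter (· ∈ A),
        ∑ q ∈ (hatcube2 r ℓ x').filter (· ∉ A), Jint2 α p q
      else 0) = ∑ p ∈ A, if x = cubeIndex (2 ^ (r * ℓ)) p then
        ∑ q ∈ partners r A ℓ p, Jint2 α p q else 0 := by
    intro x
    rw [tsum_eq_sum (s := Icc (x - 1) (x + 1)) fun x' hx' =>
        if_neg (mt mem_Icc_of_isBoundaryPair hx'),
      ← sum_filter, sum_comm, filter_mem_eq_inter, inter_comm, ← filter_mem_eq_inter, sum_filter]
    refine sum_congr rfl fun p _ => ?_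
    by_cases hx : x = cubeIndex (2 ^ (r * ℓ)) p
    · subst hx
      simp only [partners, if_true]
      split_ifs
      · rw [sum_biUnion fun x' _ y' _ hxy =>
          (disjoint_hatcube2 hxy).mono (filter_subset _ _) (filter_subset _ _)]
      · simp
    · rw [if_neg hx, if_neg fun hp => hx (cubeIndex_eq_of_mem_hatcube2 hp).symm]
  rw [Qlev, tsum_congr hcube,
    Summable.tsum_finsetSum fun p _ => (hasSum_ite_eq _ _).summable]
  exact sum_congr rfl fun p _ => tsum_ite_eq _ _

lemma of_mem_partners {r : ℕ} {A : Finset (ℤ × ℤ)} {ℓ : ℕ} {p q : ℤ × ℤ}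
    (h : q ∈ partners r A ℓ p) :
    p ∈ hatcube2 r ℓ (cubeIndex (2 ^ (r * ℓ)) p) ∧ q ∉ A ∧
      IsBoundaryPair r A ℓ (cubeIndex (2 ^ (r * ℓ)) p) (cubeIndex (2 ^ (r * ℓ)) q) := by
  dsimp only [partners] at h
  split_ifs at h with hp
  · obtain ⟨x', hx', hq⟩ := mem_biUnion.mp h
    rw [mem_filter] at hx' hq
    rw [cubeIndex_eq_of_mem_hatcube2 hq.1]
    exact ⟨hp, hq.2, hx'.2⟩
  · exact absurd h (notMem_empty q)

lemma pairwise_disjoint_partners {r : ℕ} {A : Finset (ℤ × ℤ)} (p : ℤ × ℤ) :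
    Pairwise (Disjoint on fun ℓ => partners r A ℓ p) := by
  refine (pairwise_disjoint_on _).mpr fun ℓ k hlk => disjoint_left.mpr fun q hℓ hk => ?_
  obtain ⟨-, -, ⟨hadjℓ, -⟩⟩ := of_mem_partners hℓ
  obtain ⟨hp, -, ⟨hadjk, -⟩⟩ := of_mem_partners hk
  have hq := cubeIndex_eq_of_mem_hatcube2_of_abs_le hlk hp
    ((le_add_of_nonneg_right (abs_nonneg _)).trans hadjℓ.le)
    ((le_add_of_nonneg_left (abs_nonneg _)).trans hadjℓ.le)
  simp [hq] at hadjk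

theorem stmt11_general (r : ℕ) (α : ℝ) (hα1 : 2 < α)
    (A : Finset (ℤ × ℤ)) :
    ∑' ℓ : ℕ, Qlev r α A ℓ ≤
      ∑ p ∈ A, ∑' q : ℤ × ℤ, if q ∈ A then 0 else Jint2 α p q := by
  refine Real.tsum_le_of_sum_range_le (fun ℓ => ?_) fun L => ?_
  · rw [Qlev_eq_sum_partners]
    exact sum_nonneg fun p _ => sum_nonneg fun q _ => Jint2_nonneg α p q
  simp_rw [Qlev_eq_sum_partners]
  rw [sum_comm]
  refine sum_le_sum fun p _ => ?_
  rw [← sum_biUnion ((pairwise_disjoint_partners p).set_pairwise _)]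
  refine sum_le_tsum_ite_of_forall_notMem (Jint2_nonneg α p) (summable_Jint2 hα1 p)
    fun q hq => ?_
  obtain ⟨ℓ, -, hq⟩ := mem_biUnion.mp hq
  exact (of_mem_partners hq).2.1

theorem stmt11 (r : ℕ) (hr : 4 < r) (α : ℝ) (hα1 : 2 < α) (hα2 : α ≤ 3)
    (A : Finset (ℤ × ℤ)) :
    ∑' ℓ : ℕ, Qlev r α A ℓ ≤
      ∑ p ∈ A, ∑' q : ℤ × ℤ, if q ∈ A then 0 else Jint2 α p q :=
  stmt11_general r α hα1 A
end

section
/- Let 1 < α < 2 and fix M_ℓ = M₀·2^{δℓ} with M₀ > 2 and δ > 0. Suppose the ℓ-interval B = [b, b + 2^ℓ) ∩ ℤ is plus favored with respect to σ : ℤ → {-1,+1}, i.e., (I) σ_y = 1 for all y with 1 ≤ d(y, B) ≤ 2^{ℓ-1}, and (II) for each 1 ≤ k ≤ M_ℓ, the translates I_ℓ(x ± 16k) (where B = I_ℓ(x)) each contain at most 2^ℓ/M_ℓ minus spins. Then for every integer 0 < p ≤ M_ℓ·2^ℓ, the number of plus spins of σ in [b + 2^ℓ, b + 2^ℓ + p)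 ∩ ℤ is at least (1 − 2/M_ℓ)·p, and similarly in [b − p, b) ∩ ℤ. -/
/-!
Read the spins outwards from the block `B = [b, b + L)`, as a sequence indexed by `ℕ` on each
side, and count the minus spins among the first `n` with `Nat.count`. Windows with `2n ≤ L` lie
in the plus region (I). A longer window, `n = qL + r` with `r < L`, is covered by the first
`q + 1` translates of `B`, each with at most `L / N` minus spins by (II), and `(q + 1) L ≤ 2n`.
If `q + 1 > N` that many translates are not available; then the remainder `r` is counted as
all minus, which still gives `qL / N + r ≤ 2n / N` because `r (N - 2) ≤ qL`.
-/

open Finset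

namespace Nat

variable {p : ℕ → Prop} [DecidablePred p] {L : ℕ} {N : ℝ}

theorem count_add_le_count_add (a d : ℕ) : count p (a + d) ≤ count p a + d := by
  rw [count_add]
  exact Nat.add_le_add_left (count_le _) _

theorem count_mul_le_of_blocks
    (hblock : ∀ k : ℕ, (k + 1 : ℝ) ≤ N → (count (fun i => p (L * k + i)) L : ℝ) ≤ L / N) :
    ∀ K : ℕ, (K : ℝ) ≤ N → (count p (L * K) : ℝ) ≤ K * (L / N)
  | 0, _ => by simp
  | K + 1, hK => by
    push_cast at hK
    rw [Nat.mul_succ, count_add]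
    push_cast
    linarith [count_mul_le_of_blocks hblock K (by linarith), hblock K hK]

theorem count_le_two_mul_div_of_blocks (hN : 2 < N) (hstart : ∀ i, 2 * (i + 1) ≤ L → ¬ p i)
    (hblock : ∀ k : ℕ, (k + 1 : ℝ) ≤ N → (count (fun i => p (L * k + i)) L : ℝ) ≤ L / N)
    {n : ℕ} (hn : (n : ℝ) ≤ N * L) : (count p n : ℝ) ≤ 2 * n / N := by
  have hN0 : 0 < N := by linarith
  rcases le_or_gt (2 * n) L with hsmall | hlarge
  · rw [count_iff_forall_not.2 fun i hi => hstart i (by omega)]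
    simp only [CharP.cast_eq_zero]
    positivity
  have hL : 0 < L := by
    rcases Nat.eq_zero_or_pos L with rfl | hL
    · norm_num at hn
      omega
    · exact hL
  obtain ⟨q, r, hr, rfl⟩ : ∃ q r, r < L ∧ n = L * q + r :=
    ⟨n / L, n % L, Nat.mod_lt _ hL, (Nat.div_add_mod n L).symm⟩
  have hrL : (r : ℝ) < L := by exact_mod_cast hr
  push_cast at hn ⊢
  have hq : (q : ℝ) ≤ N := by
    by_contra! h
    nlinarith
  by_cases hq1 : (q : ℝ) + 1 ≤ N
  · have hcover : q * L + L ≤ 2 * (L * q + r) := by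
      rcases q with _ | q
      · omega
      · nlinarith
    calc (count p (L * q + r) : ℝ) ≤ count p (L * (q + 1)) := by
          exact_mod_cast count_monotone p (by rw [Nat.mul_succ]; omega)
      _ ≤ (q + 1 : ℕ) * (L / N) := count_mul_le_of_blocks hblock _ (by push_cast; exact hq1)
      _ = (q * L + L : ℕ) / N := by push_cast; ring
      _ ≤ 2 * (L * q + r) / N := by gcongr; exact_mod_cast hcover
  · push Not at hq1
    calc (count p (L * q + r) : ℝ) ≤ count p (L * q) + r := by
          exact_mod_cast count_add_le_count_add _ _
      _ ≤ q * (L / N) + r := by gcongr; exact count_mul_le_of_blocks hblock q hq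
      _ ≤ 2 * (L * q + r) / N := by
          rw [le_div_iff₀ hN0, add_mul, mul_assoc, div_mul_cancel₀ _ hN0.ne']
          nlinarith

end Nat

theorem card_filter_Ico_add_eq_count (P : ℤ → Prop) [DecidablePred P] (c : ℤ) (n : ℕ) :
    #{z ∈ Ico c (c + n) | P z} = Nat.count (fun i => P (c + i)) n := by
  rw [Int.Ico_eq_finset_map, filter_map, card_map, Nat.count_eq_card_filter_range]
  simp

theorem card_filter_Ico_sub_eq_count (P : ℤ → Prop) [DecidablePred P] (c : ℤ) (n : ℕ) :
    #{z ∈ Ico (c - n) c | P z} = Nat.count (fun i => P (c - 1 - i)) n := by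
  rw [Nat.count_eq_card_filter_range]
  refine card_nbij' (fun z => (c - 1 - z).toNat) (fun i => c - 1 - i) ?_ ?_ ?_ ?_ <;>
    simp only [coe_filter, mem_Ico, mem_range, Set.MapsTo, Set.LeftInvOn, Set.mem_ofPred_eq]
  · rintro z ⟨hz, hP⟩
    refine ⟨by omega, ?_⟩
    rwa [Int.toNat_of_nonneg (by omega), sub_sub_cancel]
  · rintro i ⟨hi, hP⟩
    exact ⟨by omega, hP⟩
  · intro z hz
    omega
  · intro i _
    omega

theorem le_card_filter_eq_one {α : Type*} {σ : α → ℤ} (hσ : ∀ z, σ z = 1 ∨ σ z = -1)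
    {S : Finset α} {ε : ℝ} (h : (#{z ∈ S | σ z = -1} : ℝ) ≤ ε * #S) :
    (1 - ε) * #S ≤ #{z ∈ S | σ z = 1} := by
  have hsplit : #{z ∈ S | σ z = 1} + #{z ∈ S | σ z = -1} = #S := by
    rw [filter_congr (p := fun z => σ z = -1) (q := fun z => ¬ σ z = 1) fun z _ => by
      rcases hσ z with h | h <;> simp [h]]
    exact card_filter_add_card_filter_not _
  have : (#{z ∈ S | σ z = 1} : ℝ) + #{z ∈ S | σ z = -1} = #S := by exact_mod_cast hsplit
  linarith

/-- The paper's condition with `L = 2^ℓ` and `N = M_ℓ`; the translates `I_ℓ(x ± 16k)` of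
`B = [b, b + L)` are the blocks `[b + Lk, b + L(k + 1))`. -/
def PlusFavored (σ : ℤ → ℤ) (b : ℤ) (L : ℕ) (N : ℝ) : Prop :=
  (∀ y : ℤ, ((1 ≤ b - y ∧ b - y ≤ (L : ℤ) / 2) ∨
      (b + L ≤ y ∧ y - (b + L - 1) ≤ (L : ℤ) / 2)) → σ y = 1) ∧
    ∀ k : ℤ, 1 ≤ |k| → (|k| : ℝ) ≤ N →
      (#{z ∈ Ico (b + L * k) (b + L * (k + 1)) | σ z = -1} : ℝ) ≤ L / N

namespace PlusFavored

variable {σ : ℤ → ℤ} {b : ℤ} {L : ℕ} {N : ℝ}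

theorem card_minus_Ico_right_le (h : PlusFavored σ b L N) (hN : 2 < N) {p : ℕ}
    (hp : (p : ℝ) ≤ N * L) :
    (#{z ∈ Ico (b + L) (b + L + p) | σ z = -1} : ℝ) ≤ 2 / N * p := by
  rw [card_filter_Ico_add_eq_count, div_mul_eq_mul_div]
  refine Nat.count_le_two_mul_div_of_blocks hN (fun i hi => ?_) (fun k hk => ?_) hp
  · rw [h.1 _ (Or.inr ⟨by omega, by omega⟩)]
    norm_num
  · have hblock := h.2 (k + 1) (by rw [abs_of_nonneg (by positivity)]; omega)
      (by push_cast; rwa [abs_of_nonneg (by positivity)])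
    rw [show b + L * ((k : ℤ) + 1 + 1) = b + L * (k + 1) + L by ring,
      card_filter_Ico_add_eq_count] at hblock
    convert hblock using 4 with i
    push_cast
    ring_nf

theorem card_minus_Ico_left_le (h : PlusFavored σ b L N) (hN : 2 < N) {p : ℕ}
    (hp : (p : ℝ) ≤ N * L) :
    (#{z ∈ Ico (b - p) b | σ z = -1} : ℝ) ≤ 2 / N * p := by
  rw [card_filter_Ico_sub_eq_count, div_mul_eq_mul_div]
  refine Nat.count_le_two_mul_div_of_blocks hN (fun i hi => ?_) (fun k hk => ?_) hp
  · rw [h.1 _ (Or.inl ⟨by omega, by omega⟩)]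
    norm_num
  · have hblock := h.2 (-(k + 1)) (by rw [abs_neg, abs_of_nonneg (by positivity)]; omega)
      (by push_cast; rwa [abs_neg, abs_of_nonneg (by positivity)])
    rw [show b + L * (-((k : ℤ) + 1) + 1) = b - L * k by ring,
      show b + L * -((k : ℤ) + 1) = b - L * k - L by ring,
      card_filter_Ico_sub_eq_count] at hblock
    convert hblock using 4 with i
    push_cast
    ring_nf

theorem le_card_plus_Ico (h : PlusFavored σ b L N) (hσ : ∀ z, σ z = 1 ∨ σ z = -1)
    (hN : 2 < N) {p : ℕ} (hp : (p : ℝ) ≤ N * L) :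
    (1 - 2 / N) * p ≤ #{z ∈ Ico (b + L) (b + L + p) | σ z = 1} ∧
      (1 - 2 / N) * p ≤ #{z ∈ Ico (b - p) b | σ z = 1} := by
  have hcard : (p : ℝ) = #(Ico (b + L) (b + L + p)) ∧ (p : ℝ) = #(Ico (b - p) b) := by simp
  constructor
  · rw [hcard.1]
    exact le_card_filter_eq_one hσ (hcard.1 ▸ h.card_minus_Ico_right_le hN hp)
  · rw [hcard.2]
    exact le_card_filter_eq_one hσ (hcard.2 ▸ h.card_minus_Ico_left_le hN hp)

end PlusFavored

theorem stmt16_general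
    (M₀ δ : ℝ) (hM₀ : 2 < M₀) (hδ : 0 < δ)
    (ℓ : ℕ) (σ : ℤ → ℤ) (hσ : ∀ z, σ z = 1 ∨ σ z = -1) (b : ℤ)
    (hI : ∀ y : ℤ,
      ((1 ≤ b - y ∧ b - y ≤ (2 ^ ℓ : ℤ) / 2) ∨
        (b + 2 ^ ℓ ≤ y ∧ y - (b + 2 ^ ℓ - 1) ≤ (2 ^ ℓ : ℤ) / 2)) → σ y = 1)
    (hII : ∀ k : ℤ, 1 ≤ |k| → (|k| : ℝ) ≤ M₀ * 2 ^ (δ * (ℓ : ℝ)) →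
      (((Finset.Ico (b + 2 ^ ℓ * k) (b + 2 ^ ℓ * (k + 1))).filter
          (fun z => σ z = -1)).card : ℝ) ≤
        (2 : ℝ) ^ ℓ / (M₀ * 2 ^ (δ * (ℓ : ℝ)))) :
    ∀ p : ℕ, 0 < p → (p : ℝ) ≤ M₀ * 2 ^ (δ * (ℓ : ℝ)) * 2 ^ ℓ →
      (1 - 2 / (M₀ * 2 ^ (δ * (ℓ : ℝ)))) * p ≤
        (((Finset.Ico (b + 2 ^ ℓ) (b + 2 ^ ℓ + p)).filter
            (fun z => σ z = 1)).card : ℝ) ∧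
      (1 - 2 / (M₀ * 2 ^ (δ * (ℓ : ℝ)))) * p ≤
        (((Finset.Ico (b - p) b).filter (fun z => σ z = 1)).card : ℝ) := by
  intro p _ hp
  have hN : 2 < M₀ * 2 ^ (δ * (ℓ : ℝ)) := by
    nlinarith [Real.one_le_rpow one_le_two (by positivity : 0 ≤ δ * (ℓ : ℝ))]
  have hfav : PlusFavored σ b (2 ^ ℓ) (M₀ * 2 ^ (δ * (ℓ : ℝ))) :=
    ⟨by push_cast; exact hI, by push_cast; exact hII⟩
  exact_mod_cast hfav.le_card_plus_Ico hσ hN (by exact_mod_cast hp)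

theorem stmt16 (α : ℝ) (hα1 : 1 < α) (hα2 : α < 2)
    (M₀ δ : ℝ) (hM₀ : 2 < M₀) (hδ : 0 < δ)
    (ℓ : ℕ) (σ : ℤ → ℤ) (hσ : ∀ z, σ z = 1 ∨ σ z = -1) (b : ℤ)
    (hI : ∀ y : ℤ,
      ((1 ≤ b - y ∧ b - y ≤ (2 ^ ℓ : ℤ) / 2) ∨
        (b + 2 ^ ℓ ≤ y ∧ y - (b + 2 ^ ℓ - 1) ≤ (2 ^ ℓ : ℤ) / 2)) → σ y = 1)
    (hII : ∀ k : ℤ, 1 ≤ |k| → (|k| : ℝ) ≤ M₀ * 2 ^ (δ * (ℓ : ℝ)) →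
      (((Finset.Ico (b + 2 ^ ℓ * k) (b + 2 ^ ℓ * (k + 1))).filter
          (fun z => σ z = -1)).card : ℝ) ≤
        (2 : ℝ) ^ ℓ / (M₀ * 2 ^ (δ * (ℓ : ℝ)))) :
    ∀ p : ℕ, 0 < p → (p : ℝ) ≤ M₀ * 2 ^ (δ * (ℓ : ℝ)) * 2 ^ ℓ →
      (1 - 2 / (M₀ * 2 ^ (δ * (ℓ : ℝ)))) * p ≤
        (((Finset.Ico (b + 2 ^ ℓ) (b + 2 ^ ℓ + p)).filter
            (fun z => σ z = 1)).card : ℝ) ∧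
      (1 - 2 / (M₀ * 2 ^ (δ * (ℓ : ℝ)))) * p ≤
        (((Finset.Ico (b - p) b).filter (fun z => σ z = 1)).card : ℝ) :=
  stmt16_general M₀ δ hM₀ hδ ℓ σ hσ b hI hII
end

section
/- Let 1 < α < 3/2. For any finite A ⊂ ℤ contained in an interval I of length 2^n, and any finite family {B_i}_{i=1}^k of pairwise disjoint intervals of length 2^m each containing at least one point of A, such that any two consecutive B_i satisfy a gap structure allowing k ≥ (2^{n-m}/(5M_n))^{log_{3.9} 2} where M_n = M₀2^{δn} — then summing disjoint local interaction lower bounds J(B̄_i⁻, B̄_i⁺) ≥ c·2^{mθ} over every other index i yields ∑_{x,y ∈ Ī, σ_x ≠ σ_y} |x−y|^{−α} ≥ (k/2)·c·2^{mθ}, where θ = min{2 − α − 10δ, log_{3.9} 2}. -/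
/-! The blocks `B 0, B 2, B 4, …` are pairwise disjoint and there are `⌈k/2⌉ ≥ k/2` of them;
since the interaction is a sum of nonnegative pair weights, their local lower bounds add up
inside `Ibar`. -/

open Finset Function

theorem Finset.sum_sum_sum_le_of_pairwiseDisjoint {ι α M : Type*} [AddCommMonoid M]
    [PartialOrder M] [IsOrderedAddMonoid M] {s : Finset ι} {B : ι → Finset α} {S : Finset α}
    {f : α → α → M} (hf : ∀ x y, 0 ≤ f x y) (hB : (s : Set ι).PairwiseDisjoint B)
    (hsub : ∀ i ∈ s, B i ⊆ S) :
    ∑ i ∈ s, ∑ x ∈ B i, ∑ y ∈ B i, f x y ≤ ∑ x ∈ S, ∑ y ∈ S, f x y := by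
  classical
  have hinner : ∀ i ∈ s, ∀ x ∈ B i, ∑ y ∈ B i, f x y ≤ ∑ y ∈ S, f x y := fun i hi x _ ↦
    sum_le_sum_of_subset_of_nonneg (hsub i hi) fun y _ _ ↦ hf x y
  calc ∑ i ∈ s, ∑ x ∈ B i, ∑ y ∈ B i, f x y
      ≤ ∑ i ∈ s, ∑ x ∈ B i, ∑ y ∈ S, f x y :=
        sum_le_sum fun i hi ↦ sum_le_sum (hinner i hi)
    _ = ∑ x ∈ s.biUnion B, ∑ y ∈ S, f x y := (sum_biUnion hB).symm
    _ ≤ ∑ x ∈ S, ∑ y ∈ S, f x y :=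
        sum_le_sum_of_subset_of_nonneg (biUnion_subset.2 hsub) fun x _ _ ↦
          sum_nonneg fun y _ ↦ hf x y

def Fin.evenIdx {k : ℕ} (j : Fin ((k + 1) / 2)) : Fin k :=
  ⟨2 * j, by omega⟩

theorem Fin.pairwise_disjoint_comp_evenIdx {α : Type*} {k : ℕ} {B : Fin k → Finset α}
    (hgap : ∀ i j : Fin k, (i : ℕ) + 2 ≤ (j : ℕ) → Disjoint (B i) (B j)) :
    Pairwise (Disjoint on B ∘ Fin.evenIdx) := by
  intro j j' hne
  rcases lt_or_gt_of_ne (Fin.val_ne_of_ne hne) with h | h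
  · exact hgap _ _ (by simp only [Fin.evenIdx]; omega)
  · exact (hgap _ _ (by simp only [Fin.evenIdx]; omega)).symm

theorem Nat.cast_div_two_le_cast_add_one_div_two {K : Type*} [Field K] [LinearOrder K]
    [IsStrictOrderedRing K] (k : ℕ) : (k : K) / 2 ≤ ((k + 1) / 2 : ℕ) := by
  have : k ≤ 2 * ((k + 1) / 2) := by omega
  rw [div_le_iff₀ two_pos]
  exact_mod_cast this.trans_eq (mul_comm _ _)

theorem stmt18_general (α c : ℝ) (hc : 0 ≤ c) (θ : ℝ)
    (m : ℕ) (σ : ℤ → ℤ)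
    (Ibar : Finset ℤ) (k : ℕ) (B : Fin k → Finset ℤ)
    (hsub : ∀ i, B i ⊆ Ibar)
    (hgap : ∀ i j : Fin k, (i : ℕ) + 2 ≤ (j : ℕ) → Disjoint (B i) (B j))
    (hloc : ∀ i, c * (2 : ℝ) ^ ((m : ℝ) * θ) ≤
      ∑ x ∈ B i, ∑ y ∈ B i,
        if σ x ≠ σ y then |(x : ℝ) - (y : ℝ)| ^ (-α) else 0) :
    ((k : ℝ) / 2) * c * (2 : ℝ) ^ ((m : ℝ) * θ) ≤
      ∑ x ∈ Ibar, ∑ y ∈ Ibar,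
        if σ x ≠ σ y then |(x : ℝ) - (y : ℝ)| ^ (-α) else 0 := by
  set t := c * (2 : ℝ) ^ ((m : ℝ) * θ)
  have hweight : ∀ x y : ℤ,
      0 ≤ if σ x ≠ σ y then |(x : ℝ) - (y : ℝ)| ^ (-α) else 0 := fun x y ↦ by
    split_ifs <;> positivity
  calc ((k : ℝ) / 2) * c * (2 : ℝ) ^ ((m : ℝ) * θ) = (k : ℝ) / 2 * t := mul_assoc _ _ _
    _ ≤ ((k + 1) / 2 : ℕ) * t := by gcongr; exact Nat.cast_div_two_le_cast_add_one_div_two k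
    _ = ∑ j : Fin ((k + 1) / 2), t := by simp
    _ ≤ ∑ j : Fin ((k + 1) / 2), ∑ x ∈ B j.evenIdx, ∑ y ∈ B j.evenIdx,
          if σ x ≠ σ y then |(x : ℝ) - (y : ℝ)| ^ (-α) else 0 :=
        sum_le_sum fun j _ ↦ hloc j.evenIdx
    _ ≤ _ := sum_sum_sum_le_of_pairwiseDisjoint hweight
        ((Fin.pairwise_disjoint_comp_evenIdx hgap).set_pairwise _) fun j _ ↦ hsub j.evenIdx

theorem stmt18 (α δ M₀ c : ℝ) (hα1 : 1 < α) (hα2 : α < 3 / 2) (hδ : 0 < δ)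
    (hM₀ : 2 < M₀) (hc : 0 ≤ c) (θ : ℝ)
    (hθ : θ = min (2 - α - 10 * δ) (Real.logb 3.9 2))
    (n m : ℕ) (hmn : m ≤ n) (σ : ℤ → ℤ) (hσ : ∀ z, σ z = 1 ∨ σ z = -1)
    (Ibar : Finset ℤ) (k : ℕ) (B : Fin k → Finset ℤ)
    (hk : ((2 : ℝ) ^ (n - m) / (5 * (M₀ * 2 ^ (δ * (n : ℝ))))) ^ (Real.logb 3.9 2)
        ≤ (k : ℝ))
    (hsub : ∀ i, B i ⊆ Ibar)
    (hgap : ∀ i j : Fin k, (i : ℕ) + 2 ≤ (j : ℕ) → Disjoint (B i) (B j))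
    (hloc : ∀ i, c * (2 : ℝ) ^ ((m : ℝ) * θ) ≤
      ∑ x ∈ B i, ∑ y ∈ B i,
        if σ x ≠ σ y then |(x : ℝ) - (y : ℝ)| ^ (-α) else 0) :
    ((k : ℝ) / 2) * c * (2 : ℝ) ^ ((m : ℝ) * θ) ≤
      ∑ x ∈ Ibar, ∑ y ∈ Ibar,
        if σ x ≠ σ y then |(x : ℝ) - (y : ℝ)| ^ (-α) else 0 :=
  stmt18_general α c hc θ m σ Ibar k B hsub hgap hloc
end
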